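/- arXiv:0808.3431 — 8 statements merged into one kernel-verified Lean document; each statement's English description precedes it below -/
import Mathlib

section
/- Suppose (P*, J*) is a feasible pair of power-allocation strategies forming a saddle point of the ergodic capacity, i.e. C(P, J*) ≤ C(P*, J*) ≤ C(P*, J) for every feasible transmitter strategy P and every feasible jammer strategy J. Fix a rate R > 0 and arbitrary feasible strategies P_a and J_a. Define P̂ = P* if C(P*, J*) ≥ R and P̂ = P_a otherwise, and define Ĵ = J_a if C(P*, J*) > R and Ĵ = J* otherwise. Then (P̂, Ĵ) is a saddle point of the outage indicator: for every feasible P and every feasible J, 𝟙{C(P̂, J) < R} ≤ 𝟙{C(P̂, Ĵ) < R} ≤ 𝟙{C(P, Ĵ) < R}. -/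
open MeasureTheory Set Classical

/-- The ergodic capacity `C(P, J)` of the fast fading channel with density `p`,
noise power `σ`, transmitter power allocation `P` and jammer power allocation `J`. -/
noncomputable def ergCap (p : ℝ → ℝ) (σ : ℝ) (P J : ℝ → ℝ) : ℝ :=
  ∫ h in Ioi (0 : ℝ), Real.log (1 + h * P h / (σ + J h)) * p h

/-- A power allocation strategy `P` is feasible for the budget `B`
(under the fading density `p`) if it is measurable, nonnegative on `(0, ∞)`, and
its average power does not exceed `B`. -/
def Feasible (p : ℝ → ℝ) (B : ℝ) (P : ℝ → ℝ) : Prop :=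
  Measurable P ∧ (∀ h, 0 < h → 0 ≤ P h) ∧ (∫ h in Ioi (0 : ℝ), P h * p h) ≤ B

/-- if `(P*, J*)` is a saddle point of the ergodic capacity, then the pair
`(P̂, Ĵ)` built from `(P*, J*)` and arbitrary feasible strategies `P_a`, `J_a` by comparing
`C(P*, J*)` with the rate `R` is a saddle point of the outage indicator. -/
theorem stmt0
    (p : ℝ → ℝ) (σ : ℝ) (hσ : 0 < σ)
    (hp_nonneg : ∀ h, 0 ≤ p h) (hp_int : (∫ h in Ioi (0 : ℝ), p h) = 1)
    (Pbar Jbar : ℝ) (hPbar : 0 < Pbar) (hJbar : 0 < Jbar)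
    (R : ℝ) (hR : 0 < R)
    (Pstar Jstar : ℝ → ℝ)
    (hPstar : Feasible p Pbar Pstar) (hJstar : Feasible p Jbar Jstar)
    (hsaddle₁ : ∀ P, Feasible p Pbar P → ergCap p σ P Jstar ≤ ergCap p σ Pstar Jstar)
    (hsaddle₂ : ∀ J, Feasible p Jbar J → ergCap p σ Pstar Jstar ≤ ergCap p σ Pstar J)
    (Pa Ja : ℝ → ℝ) (hPa : Feasible p Pbar Pa) (hJa : Feasible p Jbar Ja)
    (Phat Jhat : ℝ → ℝ)
    (hPhat : Phat = if R ≤ ergCap p σ Pstar Jstar then Pstar else Pa)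
    (hJhat : Jhat = if R < ergCap p σ Pstar Jstar then Ja else Jstar) :
    (∀ J, Feasible p Jbar J →
      (if ergCap p σ Phat J < R then (1 : ℝ) else 0) ≤
        (if ergCap p σ Phat Jhat < R then (1 : ℝ) else 0)) ∧
    (∀ P, Feasible p Pbar P →
      (if ergCap p σ Phat Jhat < R then (1 : ℝ) else 0) ≤
        (if ergCap p σ P Jhat < R then (1 : ℝ) else 0)) := by
  set C := ergCap p σ Pstar Jstar with hC
  rcases lt_trichotomy C R with hlt | heq | hgt
  · -- C* < R : Phat = Pa, Jhat = Jstar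
    have h1 : ¬ R ≤ C := not_le.mpr hlt
    have h2 : ¬ R < C := not_lt.mpr hlt.le
    rw [if_neg h1] at hPhat
    rw [if_neg h2] at hJhat
    subst hPhat hJhat
    have hmid : ergCap p σ Phat Jhat < R := lt_of_le_of_lt (hsaddle₁ Phat hPa) hlt
    constructor
    · intro J hJ
      rw [if_pos hmid]
      split <;> norm_num
    · intro P hP
      have : ergCap p σ P Jhat < R := lt_of_le_of_lt (hsaddle₁ P hP) hlt
      rw [if_pos hmid, if_pos this]
  · -- C* = R
    have h1 : R ≤ C := heq.ge
    have h2 : ¬ R < C := by rw [heq]; exact lt_irrefl R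
    rw [if_pos h1] at hPhat
    rw [if_neg h2] at hJhat
    subst hPhat hJhat
    have hmid : ¬ ergCap p σ Phat Jhat < R := by rw [← hC, heq]; exact lt_irrefl R
    constructor
    · intro J hJ
      rw [if_neg hmid]
      have : ¬ ergCap p σ Phat J < R := not_lt.mpr (heq.ge.trans (hsaddle₂ J hJ))
      rw [if_neg this]
    · intro P hP
      rw [if_neg hmid]
      split <;> norm_num
  · -- R < C*
    have h1 : R ≤ C := hgt.le
    rw [if_pos h1] at hPhat
    rw [if_pos hgt] at hJhat
    subst hPhat hJhat
    have hmid : ¬ ergCap p σ Phat Jhat < R := not_lt.mpr (hgt.le.trans (hsaddle₂ Jhat hJa))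
    constructor
    · intro J hJ
      rw [if_neg hmid]
      have : ¬ ergCap p σ Phat J < R := not_lt.mpr (hgt.le.trans (hsaddle₂ J hJ))
      rw [if_neg this]
    · intro P hP
      rw [if_neg hmid]
      split <;> norm_num
end

section
/- Consider the maximin problem (Problem A): maximize, over y ≥ 0 with g(y) ≤ G, the inner value m_A(y) := min{ f(x) : x ≥ 0, h(x,y) ≥ H }. Suppose (x₁, y₁) is an optimal solution of Problem A, i.e. g(y₁) ≤ G, h(x₁, y₁) ≥ H, f(x₁) = m_A(y₁), and m_A(y) ≤ f(x₁) for every y ≥ 0 with g(y) ≤ G. Then both constraints are satisfied with equality: h(x₁, y₁) = H and g(y₁) = G. -/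
/-!
Since `f` is strictly increasing, the inner minimum for `y` is attained at the least feasible
`x`, so `x₁` is the least feasible `x` for `y₁`; as `h 0 y₁ < H`, the intermediate value theorem
forces `h x₁ y₁ = H`. If `g y₁ < G`, continuity of `g` gives a feasible `y₂ > y₁`; since `h`
decreases in `y` and increases in `x`, the least feasible `x` for `y₂` exceeds `x₁`, so the
inner value at `y₂` beats the optimum.
-/

open Set

def feasibleSet (φ : ℝ → ℝ) (H : ℝ) : Set ℝ := {x | 0 ≤ x ∧ H ≤ φ x}

section FeasibleSet

variable {φ : ℝ → ℝ} {H : ℝ}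

theorem isLeast_feasibleSet_sInf (hφ : ContinuousOn φ (Ici 0))
    (hne : (feasibleSet φ H).Nonempty) :
    IsLeast (feasibleSet φ H) (sInf (feasibleSet φ H)) := by
  have hbdd : BddBelow (feasibleSet φ H) := ⟨0, fun _ hx => hx.1⟩
  have hclosed : IsClosed (feasibleSet φ H) :=
    hφ.preimage_isClosed_of_isClosed isClosed_Ici isClosed_Ici
  exact ⟨hclosed.csInf_mem hne hbdd, fun _ hx => csInf_le hbdd hx⟩

theorem apply_eq_of_isLeast_feasibleSet (hφ : ContinuousOn φ (Ici 0)) (hφ0 : φ 0 < H) {a : ℝ}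
    (ha : IsLeast (feasibleSet φ H) a) : φ a = H := by
  obtain ⟨x, hx, hxH⟩ :=
    intermediate_value_Icc ha.1.1 (hφ.mono Icc_subset_Ici_self) ⟨hφ0.le, ha.1.2⟩
  have hxa : x = a := le_antisymm hx.2 (ha.2 ⟨hx.1, hxH.ge⟩)
  rwa [← hxa]

theorem sInf_image_feasibleSet_eq {f : ℝ → ℝ} (hf : MonotoneOn f (Ici 0)) {a : ℝ}
    (ha : IsLeast (feasibleSet φ H) a) : sInf (f '' feasibleSet φ H) = f a :=
  ((hf.mono fun _ hx => hx.1).map_isLeast ha).csInf_eq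

end FeasibleSet

theorem ContinuousOn.exists_gt_lt {g : ℝ → ℝ} (hg : ContinuousOn g (Ici 0)) {y G : ℝ}
    (hy : 0 ≤ y) (hyG : g y < G) : ∃ y', y < y' ∧ g y' < G := by
  have hgy : ContinuousWithinAt g (Ioi y) y :=
    (hg y hy).mono fun _ hz => hy.trans (le_of_lt hz)
  exact ((hgy.eventually (gt_mem_nhds hyG)).and self_mem_nhdsWithin).exists.imp
    fun _ h => ⟨h.2, h.1⟩

theorem lt_of_mem_feasibleSet_of_lt {h : ℝ → ℝ → ℝ} {H : ℝ}
    (hh_mono : ∀ y ∈ Ici (0 : ℝ), StrictMonoOn (fun x => h x y) (Ici 0))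
    (hh_anti : ∀ x ∈ Ici (0 : ℝ), StrictAntiOn (fun y => h x y) (Ici 0))
    {x₁ x₂ y₁ y₂ : ℝ} (hx₁ : 0 ≤ x₁) (hy₁ : 0 ≤ y₁) (hy : y₁ < y₂)
    (hx₁H : h x₁ y₁ = H)
    (hx₂ : x₂ ∈ feasibleSet (fun x => h x y₂) H) : x₁ < x₂ := by
  have : h x₁ y₁ < h x₂ y₁ :=
    hx₁H ▸ hx₂.2.trans_lt (hh_anti x₂ hx₂.1 hy₁ (hy₁.trans hy.le) hy)
  exact (hh_mono y₁ hy₁).lt_iff_lt hx₁ hx₂.1 |>.mp this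

theorem stmt2_general
    (f g : ℝ → ℝ) (h : ℝ → ℝ → ℝ) (H G : ℝ)
    (hf_mono : StrictMonoOn f (Ici 0))
    (hg_cont : ContinuousOn g (Ici 0))
    (hh_cont : ContinuousOn (fun q : ℝ × ℝ => h q.1 q.2) (Ici 0 ×ˢ Ici 0))
    (hh_mono : ∀ y ∈ Ici (0 : ℝ), StrictMonoOn (fun x => h x y) (Ici 0))
    (hh_anti : ∀ x ∈ Ici (0 : ℝ), StrictAntiOn (fun y => h x y) (Ici 0))
    (hH0 : ∀ y, 0 ≤ y → h 0 y < H)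
    (hfeas : ∀ y, 0 ≤ y → ∃ x, 0 ≤ x ∧ H ≤ h x y)
    -- the inner value of the maximin problem
    (mA : ℝ → ℝ) (hmA : ∀ y, mA y = sInf (f '' {x | 0 ≤ x ∧ H ≤ h x y}))
    -- `(x₁, y₁)` is an optimal solution of the maximin problem
    (x₁ y₁ : ℝ) (hx₁ : 0 ≤ x₁) (hy₁ : 0 ≤ y₁)
    (hy₁G : g y₁ ≤ G)
    (hx₁opt : f x₁ = mA y₁)
    (hy₁opt : ∀ y, 0 ≤ y → g y ≤ G → mA y ≤ f x₁) :
    h x₁ y₁ = H ∧ g y₁ = G := by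
  have hslice : ∀ y, 0 ≤ y → ContinuousOn (fun x => h x y) (Ici 0) :=
    fun y hy => ContinuousOn.uncurry_right (f := h) y hy hh_cont
  have hleast : ∀ y, 0 ≤ y →
      IsLeast (feasibleSet (fun x => h x y) H) (sInf (feasibleSet (fun x => h x y) H)) :=
    fun y hy => isLeast_feasibleSet_sInf (hslice y hy) (hfeas y hy)
  have hmA_eq : ∀ y, 0 ≤ y → mA y = f (sInf (feasibleSet (fun x => h x y) H)) :=
    fun y hy => (hmA y).trans (sInf_image_feasibleSet_eq hf_mono.monotoneOn (hleast y hy))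
  have hx₁_least : IsLeast (feasibleSet (fun x => h x y₁) H) x₁ := by
    have := hleast y₁ hy₁
    rwa [hf_mono.injOn hx₁ this.1.1 (hx₁opt.trans (hmA_eq y₁ hy₁))]
  have hx₁_eq : h x₁ y₁ = H :=
    apply_eq_of_isLeast_feasibleSet (hslice y₁ hy₁) (hH0 y₁ hy₁) hx₁_least
  refine ⟨hx₁_eq, hy₁G.eq_of_not_lt fun hlt => ?_⟩
  obtain ⟨y₂, hy, hy₂G⟩ := hg_cont.exists_gt_lt hy₁ hlt
  have hy₂ : 0 ≤ y₂ := hy₁.trans hy.le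
  have hx_lt : x₁ < sInf (feasibleSet (fun x => h x y₂) H) :=
    lt_of_mem_feasibleSet_of_lt hh_mono hh_anti hx₁ hy₁ hy hx₁_eq (hleast y₂ hy₂).1
  have := hf_mono hx₁ (hleast y₂ hy₂).1.1 hx_lt
  linarith [hy₁opt y₂ hy₂ hy₂G.le, hmA_eq y₂ hy₂]

/-- at an optimal solution `(x₁, y₁)` of the maximin problem
(maximize over `y ≥ 0` with `g y ≤ G` the inner value `min { f x : x ≥ 0, h x y ≥ H }`),
both constraints hold with equality: `h x₁ y₁ = H` and `g y₁ = G`. -/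
theorem stmt2
    (f g : ℝ → ℝ) (h : ℝ → ℝ → ℝ) (H G : ℝ)
    (hf_cont : ContinuousOn f (Ici 0)) (hf_mono : StrictMonoOn f (Ici 0))
    (hf_unbdd : ∀ M : ℝ, ∃ x, 0 ≤ x ∧ M < f x)
    (hg_cont : ContinuousOn g (Ici 0)) (hg_mono : StrictMonoOn g (Ici 0))
    (hg_unbdd : ∀ M : ℝ, ∃ y, 0 ≤ y ∧ M < g y)
    (hh_cont : ContinuousOn (fun q : ℝ × ℝ => h q.1 q.2) (Ici 0 ×ˢ Ici 0))
    (hh_mono : ∀ y ∈ Ici (0 : ℝ), StrictMonoOn (fun x => h x y) (Ici 0))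
    (hh_anti : ∀ x ∈ Ici (0 : ℝ), StrictAntiOn (fun y => h x y) (Ici 0))
    (hH0 : ∀ y, 0 ≤ y → h 0 y < H) (hG0 : g 0 < G)
    (hfeas : ∀ y, 0 ≤ y → ∃ x, 0 ≤ x ∧ H ≤ h x y)
    -- the inner value of the maximin problem
    (mA : ℝ → ℝ) (hmA : ∀ y, mA y = sInf (f '' {x | 0 ≤ x ∧ H ≤ h x y}))
    -- `(x₁, y₁)` is an optimal solution of the maximin problem
    (x₁ y₁ : ℝ) (hx₁ : 0 ≤ x₁) (hy₁ : 0 ≤ y₁)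
    (hy₁G : g y₁ ≤ G) (hx₁H : H ≤ h x₁ y₁)
    (hx₁opt : f x₁ = mA y₁)
    (hy₁opt : ∀ y, 0 ≤ y → g y ≤ G → mA y ≤ f x₁) :
    h x₁ y₁ = H ∧ g y₁ = G :=
  stmt2_general f g h H G hf_mono hg_cont hh_cont hh_mono hh_anti hH0 hfeas mA hmA x₁ y₁ hx₁ hy₁
    hy₁G hx₁opt hy₁opt
end

section
/- Consider Problem A (maximin): maximize, over y ≥ 0 with g(y) ≤ G, the value m_A(y) := min{ f(x) : x ≥ 0, h(x,y) ≥ H }; and, for a parameter F, Problem B: maximize, over x ≥ 0 with f(x) ≤ F, the value m_B(x) := min{ g(y) : y ≥ 0, h(x,y) ≤ H }; and Problem C: minimize, over y ≥ 0 with g(y) ≤ G, the value M_C(y) := max{ h(x,y) : x ≥ 0, f(x) ≤ F }. Suppose (x₁, y₁) is an optimal solution of Problem A (g(y₁) ≤ G, h(x₁,y₁) ≥ H, f(x₁) = m_A(y₁), and m_A(y) ≤ f(x₁) for all y with g(y) ≤ G), and set F := f(x₁). Then: (i) h(x₁,y₁) = H and g(y₁) = G; (ii) (x₁, y₁) is an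 optimal solution of Problem B with this F, and the optimal value of Problem B equals G, i.e. h(x₁,y₁) ≤ H, g(y₁) = m_B(x₁), and m_B(x) ≤ G for every x ≥ 0 with f(x) ≤ F; (iii) (x₁, y₁) is an optimal solution of Problem C with this F, and the optimal value of Problem C equals H, i.e. h(x₁,y₁) = M_C(y₁) and M_C(y) ≥ H for every y ≥ 0 with g(y) ≤ G. -/
open Set

/-- duality between the three problems: if `(x₁, y₁)` is an optimal solution
of the maximin Problem A and `F := f x₁`, then (i) both constraints of Problem A hold with
equality, (ii) `(x₁, y₁)` is optimal for Problem B with optimal value `G`, and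
(iii) `(x₁, y₁)` is optimal for Problem C with optimal value `H`. -/
theorem stmt3
    (f g : ℝ → ℝ) (h : ℝ → ℝ → ℝ) (H G : ℝ)
    (hf_cont : ContinuousOn f (Ici 0)) (hf_mono : StrictMonoOn f (Ici 0))
    (hf_unbdd : ∀ M : ℝ, ∃ x, 0 ≤ x ∧ M < f x)
    (hg_cont : ContinuousOn g (Ici 0)) (hg_mono : StrictMonoOn g (Ici 0))
    (hg_unbdd : ∀ M : ℝ, ∃ y, 0 ≤ y ∧ M < g y)
    (hh_cont : ContinuousOn (fun q : ℝ × ℝ => h q.1 q.2) (Ici 0 ×ˢ Ici 0))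
    (hh_mono : ∀ y ∈ Ici (0 : ℝ), StrictMonoOn (fun x => h x y) (Ici 0))
    (hh_anti : ∀ x ∈ Ici (0 : ℝ), StrictAntiOn (fun y => h x y) (Ici 0))
    (hH0 : ∀ y, 0 ≤ y → h 0 y < H) (hG0 : g 0 < G)
    (hfeasA : ∀ y, 0 ≤ y → ∃ x, 0 ≤ x ∧ H ≤ h x y)
    (hfeasB : ∀ x, 0 ≤ x → ∃ y, 0 ≤ y ∧ h x y ≤ H)
    -- the inner values of the three problems
    (mA : ℝ → ℝ) (hmA : ∀ y, mA y = sInf (f '' {x | 0 ≤ x ∧ H ≤ h x y}))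
    (mB : ℝ → ℝ) (hmB : ∀ x, mB x = sInf (g '' {y | 0 ≤ y ∧ h x y ≤ H}))
    (F : ℝ)
    (MC : ℝ → ℝ) (hMC : ∀ y, MC y = sSup ((fun x => h x y) '' {x | 0 ≤ x ∧ f x ≤ F}))
    -- `(x₁, y₁)` is an optimal solution of Problem A
    (x₁ y₁ : ℝ) (hx₁ : 0 ≤ x₁) (hy₁ : 0 ≤ y₁)
    (hy₁G : g y₁ ≤ G) (hx₁H : H ≤ h x₁ y₁)
    (hx₁opt : f x₁ = mA y₁)
    (hy₁opt : ∀ y, 0 ≤ y → g y ≤ G → mA y ≤ f x₁)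
    -- the parameter `F` of Problems B and C is set to `f x₁`
    (hF : F = f x₁) :
    -- (i) both constraints hold with equality
    (h x₁ y₁ = H ∧ g y₁ = G) ∧
    -- (ii) `(x₁, y₁)` is optimal for Problem B, with optimal value `G`
    (h x₁ y₁ ≤ H ∧ g y₁ = mB x₁ ∧ ∀ x, 0 ≤ x → f x ≤ F → mB x ≤ G) ∧
    -- (iii) `(x₁, y₁)` is optimal for Problem C, with optimal value `H`
    (h x₁ y₁ = MC y₁ ∧ ∀ y, 0 ≤ y → g y ≤ G → H ≤ MC y) := by

  subst hF
  -- continuity of the slices x ↦ h x y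
  have hcont : ∀ y ∈ Ici (0:ℝ), ContinuousOn (fun x => h x y) (Ici 0) := by
    intro y hy
    exact hh_cont.comp (continuous_id.prodMk continuous_const).continuousOn
      (fun x hx => ⟨hx, hy⟩)
  -- from f x ≤ f x₁ deduce x ≤ x₁ (and similarly elsewhere)
  have hf_le : ∀ x a : ℝ, 0 ≤ x → 0 ≤ a → f x ≤ f a → x ≤ a := by
    intro x a hx ha hfx
    by_contra hc
    exact absurd (hf_mono ha hx (lt_of_not_ge hc)) (not_lt.mpr hfx)
  have hg_le : ∀ y a : ℝ, 0 ≤ y → 0 ≤ a → g y ≤ g a → y ≤ a := by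
    intro y a hy ha hgy
    by_contra hc
    exact absurd (hg_mono ha hy (lt_of_not_ge hc)) (not_lt.mpr hgy)
  -- (i) first equality : h x₁ y₁ = H
  have hAeq : h x₁ y₁ = H := by
    by_contra hne
    have hlt : H < h x₁ y₁ := lt_of_le_of_ne hx₁H (Ne.symm hne)
    have hIcc : H ∈ Icc (h 0 y₁) (h x₁ y₁) := ⟨(hH0 y₁ hy₁).le, hx₁H⟩
    obtain ⟨x', hx'mem, hx'eq⟩ :=
      intermediate_value_Icc hx₁ ((hcont y₁ hy₁).mono (Icc_subset_Ici_self)) hIcc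
    have hx'0 : (0:ℝ) ≤ x' := hx'mem.1
    have hx'eq : h x' y₁ = H := hx'eq
    have hx'lt : x' < x₁ := by
      refine lt_of_le_of_ne hx'mem.2 fun h1 => ?_
      rw [h1] at hx'eq
      exact hne hx'eq
    have hbdd : BddBelow (f '' {x | 0 ≤ x ∧ H ≤ h x y₁}) := by
      refine ⟨f 0, ?_⟩
      rintro z ⟨x, ⟨hx0, _⟩, rfl⟩
      exact hf_mono.monotoneOn (self_mem_Ici) hx0 hx0
    have hle : mA y₁ ≤ f x' := by
      rw [hmA]
      exact csInf_le hbdd ⟨x', ⟨hx'0, hx'eq.ge⟩, rfl⟩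
    have : f x₁ ≤ f x' := hx₁opt ▸ hle
    exact absurd this (not_le.mpr (hf_mono hx'0 hx₁ hx'lt))
  -- (i) second equality : g y₁ = G
  have hGeq : g y₁ = G := by
    by_contra hne
    have hlt : g y₁ < G := lt_of_le_of_ne hy₁G hne
    obtain ⟨Y, hY0, hYG⟩ := hg_unbdd G
    have hyY : y₁ ≤ Y := hg_le y₁ Y hy₁ hY0 (le_of_lt (hlt.trans hYG))
    have hIcc : G ∈ Icc (g y₁) (g Y) := ⟨hlt.le, hYG.le⟩
    obtain ⟨y₂, hy₂mem, hy₂eq⟩ :=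
      intermediate_value_Icc hyY (hg_cont.mono (fun z hz => hy₁.trans hz.1)) hIcc
    have hy₂0 : (0:ℝ) ≤ y₂ := hy₁.trans hy₂mem.1
    have hy₂gt : y₁ < y₂ := by
      rcases lt_or_eq_of_le hy₂mem.1 with h1 | h1
      · exact h1
      · rw [← h1] at hy₂eq; exact absurd hy₂eq (ne_of_lt hlt)
    have hxy₂ : h x₁ y₂ < H := by
      have := hh_anti x₁ hx₁ hy₁ hy₂0 hy₂gt
      simpa [hAeq] using this
    obtain ⟨x₂, hx₂0, hx₂H⟩ := hfeasA y₂ hy₂0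
    have hIcc2 : H ∈ Icc (h 0 y₂) (h x₂ y₂) := ⟨(hH0 y₂ hy₂0).le, hx₂H⟩
    obtain ⟨x', hx'mem, hx'eq⟩ :=
      intermediate_value_Icc hx₂0 ((hcont y₂ hy₂0).mono Icc_subset_Ici_self) hIcc2
    have hx'eq : h x' y₂ = H := hx'eq
    have hx'0 : (0:ℝ) ≤ x' := hx'mem.1
    have hx₁x' : x₁ < x' := by
      by_contra hc
      have : h x' y₂ ≤ h x₁ y₂ :=
        (hh_mono y₂ hy₂0).monotoneOn hx'0 hx₁ (not_lt.mp hc)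
      rw [hx'eq] at this
      exact absurd (this.trans_lt hxy₂) (lt_irrefl _)
    have hlow : f x' ≤ mA y₂ := by
      rw [hmA]
      refine le_csInf ⟨f x₂, ⟨x₂, ⟨hx₂0, hx₂H⟩, rfl⟩⟩ ?_
      rintro z ⟨x, ⟨hx0, hxH⟩, rfl⟩
      have hx'x : x' ≤ x := by
        by_contra hc
        have : h x y₂ < h x' y₂ := hh_mono y₂ hy₂0 hx0 hx'0 (lt_of_not_ge hc)
        rw [hx'eq] at this
        exact absurd (lt_of_le_of_lt hxH this) (lt_irrefl _)
      exact hf_mono.monotoneOn hx'0 hx0 hx'x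
    have hup : mA y₂ ≤ f x₁ := hy₁opt y₂ hy₂0 (le_of_eq hy₂eq)
    have : f x' ≤ f x₁ := hlow.trans hup
    exact absurd this (not_le.mpr (hf_mono hx₁ hx'0 hx₁x'))
  -- (ii) g y₁ = mB x₁
  have hBbdd : ∀ x : ℝ, BddBelow (g '' {y | 0 ≤ y ∧ h x y ≤ H}) := by
    intro x
    refine ⟨g 0, ?_⟩
    rintro z ⟨y, ⟨hy0, _⟩, rfl⟩
    exact hg_mono.monotoneOn self_mem_Ici hy0 hy0
  have hy₁memB : y₁ ∈ {y | 0 ≤ y ∧ h x₁ y ≤ H} := ⟨hy₁, hAeq.le⟩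
  have hBopt : g y₁ = mB x₁ := by
    rw [hmB]
    refine le_antisymm ?_ (csInf_le (hBbdd x₁) ⟨y₁, hy₁memB, rfl⟩)
    refine le_csInf ⟨g y₁, ⟨y₁, hy₁memB, rfl⟩⟩ ?_
    rintro z ⟨y, ⟨hy0, hyH⟩, rfl⟩
    have : y₁ ≤ y := by
      by_contra hc
      have : h x₁ y₁ < h x₁ y := hh_anti x₁ hx₁ hy0 hy₁ (lt_of_not_ge hc)
      rw [hAeq] at this
      exact absurd (hyH.trans_lt this) (lt_irrefl _)
    exact hg_mono.monotoneOn hy₁ hy0 this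
  have hBval : ∀ x, 0 ≤ x → f x ≤ f x₁ → mB x ≤ G := by
    intro x hx0 hfx
    have hxx₁ : x ≤ x₁ := hf_le x x₁ hx0 hx₁ hfx
    have hxyH : h x y₁ ≤ H := by
      have : h x y₁ ≤ h x₁ y₁ := (hh_mono y₁ hy₁).monotoneOn hx0 hx₁ hxx₁
      rw [hAeq] at this; exact this
    have : mB x ≤ g y₁ := by
      rw [hmB]
      exact csInf_le (hBbdd x) ⟨y₁, ⟨hy₁, hxyH⟩, rfl⟩
    exact this.trans_eq hGeq
  -- (iii)
  have hx₁memC : x₁ ∈ {x | 0 ≤ x ∧ f x ≤ f x₁} := ⟨hx₁, le_refl _⟩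
  have hCopt : h x₁ y₁ = MC y₁ := by
    rw [hMC]
    refine le_antisymm (le_csSup ⟨h x₁ y₁, ?_⟩ ⟨x₁, hx₁memC, rfl⟩) ?_
    · rintro z ⟨x, ⟨hx0, hfx⟩, rfl⟩
      exact (hh_mono y₁ hy₁).monotoneOn hx0 hx₁ (hf_le x x₁ hx0 hx₁ hfx)
    · refine csSup_le ⟨h x₁ y₁, ⟨x₁, hx₁memC, rfl⟩⟩ ?_
      rintro z ⟨x, ⟨hx0, hfx⟩, rfl⟩
      exact (hh_mono y₁ hy₁).monotoneOn hx0 hx₁ (hf_le x x₁ hx0 hx₁ hfx)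
  have hCval : ∀ y, 0 ≤ y → g y ≤ G → H ≤ MC y := by
    intro y hy0 hyG
    have hyy₁ : y ≤ y₁ := hg_le y y₁ hy0 hy₁ (hyG.trans_eq hGeq.symm)
    have hHle : H ≤ h x₁ y := by
      have : h x₁ y₁ ≤ h x₁ y := (hh_anti x₁ hx₁).antitoneOn hy0 hy₁ hyy₁
      rw [hAeq] at this; exact this
    have hMCge : h x₁ y ≤ MC y := by
      rw [hMC]
      refine le_csSup ⟨h x₁ y, ?_⟩ ⟨x₁, hx₁memC, rfl⟩
      rintro z ⟨x, ⟨hx0, hfx⟩, rfl⟩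
      exact (hh_mono y hy0).monotoneOn hx0 hx₁ (hf_le x x₁ hx0 hx₁ hfx)
    exact hHle.trans hMCge
  exact ⟨⟨hAeq, hGeq⟩, ⟨hAeq.le, hBopt, hBval⟩, ⟨hCopt, hCval⟩⟩
end

section
/- For every J_M > 0 and R > 0 there is at most one pair (h*, μ) ∈ (0,∞) × (0,∞) satisfying simultaneously Φ(h*, μ) = J_M/σ_N² and Ψ(h*, μ) = R. -/
/-!
Once their integrands are extended by zero to all of `(0, ∞)`, `Φ` and `Ψ` are integrals
against `p > 0` of functions that are pointwise monotone in the parameters, strictly so on a set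
of positive measure: `Φ` is strictly decreasing in `h*` and in `μ`, while `Ψ` is strictly
decreasing in `h*` and strictly increasing in `μ`. For two solutions with `h₁ ≤ h₂`, equality of
`Φ` forces `μ₂ ≤ μ₁`, and then `Ψ(h₂, μ₂) ≤ Ψ(h₂, μ₁) ≤ Ψ(h₁, μ₁)`, with equality only when the
two pairs coincide.
-/

open MeasureTheory Set

/-- `Φ(h*, μ)`: the normalized jamming power of the optimal maximin intra-frame
allocation with threshold `h*` and multiplier `μ`. -/
noncomputable def Phi (p : ℝ → ℝ) (hstar μ : ℝ) : ℝ :=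
  ∫ h in Ioi hstar, (h * (1 + μ * hstar) / (hstar * (1 + μ * h)) - 1) * p h

/-- `Ψ(h*, μ)`: the rate achieved by the optimal maximin intra-frame allocation
with threshold `h*` and multiplier `μ`. -/
noncomputable def Psi (p : ℝ → ℝ) (hstar μ : ℝ) : ℝ :=
  (∫ h in Ioo (hstar / (1 + μ * hstar)) hstar, Real.log (h * (1 + μ * hstar) / hstar) * p h)
    + ∫ h in Ioi hstar, Real.log (1 + μ * h) * p h

theorem injOn_of_antitoneOn_strictAntiOn_strictMonoOn {α β γ δ : Type*} [LinearOrder α]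
    [LinearOrder β] [Preorder γ] [PartialOrder δ] {F : α → β → γ} {G : α → β → δ}
    {s : Set α} {t : Set β}
    (hF₁ : ∀ y ∈ t, AntitoneOn (F · y) s) (hF₂ : ∀ x ∈ s, StrictAntiOn (F x) t)
    (hG₁ : ∀ y ∈ t, StrictAntiOn (G · y) s) (hG₂ : ∀ x ∈ s, StrictMonoOn (G x) t) :
    InjOn (fun z : α × β => (F z.1 z.2, G z.1 z.2)) (s ×ˢ t) := by
  suffices key : ∀ x₁ ∈ s, ∀ x₂ ∈ s, ∀ y₁ ∈ t, ∀ y₂ ∈ t, x₁ ≤ x₂ →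
      F x₁ y₁ = F x₂ y₂ → G x₁ y₁ = G x₂ y₂ → x₁ = x₂ ∧ y₁ = y₂ by
    rintro ⟨x₁, y₁⟩ ⟨hx₁, hy₁⟩ ⟨x₂, y₂⟩ ⟨hx₂, hy₂⟩ h
    simp only [Prod.mk.injEq] at h ⊢
    rcases le_total x₁ x₂ with hx | hx
    · exact key x₁ hx₁ x₂ hx₂ y₁ hy₁ y₂ hy₂ hx h.1 h.2
    · exact (key x₂ hx₂ x₁ hx₁ y₂ hy₂ y₁ hy₁ hx h.1.symm h.2.symm).imp Eq.symm Eq.symm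
  intro x₁ hx₁ x₂ hx₂ y₁ hy₁ y₂ hy₂ hx hF hG
  rcases lt_or_ge y₁ y₂ with hy | hy
  · exact absurd ((hF₂ x₂ hx₂ hy₁ hy₂ hy).trans_le ((hF₁ y₁ hy₁ hx₁ hx₂ hx).trans_eq hF))
      (lt_irrefl _)
  · have hG₂' : G x₂ y₂ = G x₂ y₁ :=
      le_antisymm ((hG₂ x₂ hx₂).monotoneOn hy₂ hy₁ hy)
        (((hG₁ y₁ hy₁).antitoneOn hx₁ hx₂ hx).trans_eq hG)
    have hy' : y₁ = y₂ := ((hG₂ x₂ hx₂).injOn hy₂ hy₁ hG₂').symm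
    subst hy'
    exact ⟨(hG₁ y₁ hy₁).injOn hx₁ hx₂ hG, rfl⟩

theorem setIntegral_lt_setIntegral_of_le_of_lt {X : Type*} [MeasurableSpace X] {μ : Measure X}
    {f g : X → ℝ} {s t : Set X} (hf : IntegrableOn f s μ) (hg : IntegrableOn g s μ)
    (hle : f ≤ᵐ[μ.restrict s] g) (hts : t ⊆ s) (ht : μ t ≠ 0) (hlt : ∀ x ∈ t, f x < g x) :
    ∫ x in s, f x ∂μ < ∫ x in s, g x ∂μ := by
  rw [← sub_pos, ← integral_sub hg hf]
  refine (setIntegral_pos_iff_support_of_nonneg_ae ?_ (hg.sub hf)).2 ?_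
  · filter_upwards [hle] with x hx using sub_nonneg.2 hx
  · refine (pos_iff_ne_zero.2 ht).trans_le (measure_mono fun x hx => ⟨?_, hts hx⟩)
    exact (sub_pos.2 (hlt x hx)).ne'

theorem setIntegral_mul_lt_setIntegral_mul {f g p : ℝ → ℝ} {s t : Set ℝ} (hs : MeasurableSet s)
    (hf : IntegrableOn (fun x => f x * p x) s) (hg : IntegrableOn (fun x => g x * p x) s)
    (hp : ∀ x ∈ s, 0 < p x) (hle : ∀ x ∈ s, f x ≤ g x) (hts : t ⊆ s) (ht : volume t ≠ 0)
    (hlt : ∀ x ∈ t, f x < g x) :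
    ∫ x in s, f x * p x < ∫ x in s, g x * p x :=
  setIntegral_lt_setIntegral_of_le_of_lt hf hg
    ((ae_restrict_iff' hs).2 <| ae_of_all _ fun x hx =>
      mul_le_mul_of_nonneg_right (hle x hx) (hp x hx).le)
    hts ht fun x hx => mul_lt_mul_of_pos_right (hlt x hx) (hp x (hts hx))

/- `min 1 (h / hs) + μ h = min (1 + μ h) (h (1 + μ hs) / hs)`: below `hs` this is the argument
of the first logarithm in `Ψ`, above `hs` that of the second. -/
noncomputable def phiIntegrand (hs μ h : ℝ) : ℝ := max (h / hs - 1) 0 / (1 + μ * h)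

noncomputable def psiIntegrand (hs μ h : ℝ) : ℝ := Real.log (max 1 (min 1 (h / hs) + μ * h))

section Integrands

variable {hs μ h : ℝ}

@[fun_prop]
theorem measurable_phiIntegrand : Measurable (phiIntegrand hs μ) := by
  unfold phiIntegrand; fun_prop

@[fun_prop]
theorem measurable_psiIntegrand : Measurable (psiIntegrand hs μ) := by
  unfold psiIntegrand; fun_prop

theorem phiIntegrand_eq_zero_of_le (hhs : 0 < hs) (h_le : h ≤ hs) : phiIntegrand hs μ h = 0 := by
  rw [phiIntegrand, max_eq_right (by rw [sub_nonpos, div_le_one hhs]; exact h_le), zero_div]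

theorem phiIntegrand_eq_of_lt (hhs : 0 < hs) (hμ : 0 ≤ μ) (h_lt : hs < h) :
    phiIntegrand hs μ h = h * (1 + μ * hs) / (hs * (1 + μ * h)) - 1 := by
  have : 0 < 1 + μ * h := by nlinarith
  rw [phiIntegrand, max_eq_left (by rw [sub_nonneg, one_le_div hhs]; exact h_lt.le),
    div_sub_one hhs.ne', div_sub_one (by positivity), div_div]
  ring

theorem phiIntegrand_nonneg (hμ : 0 ≤ μ) (hh : 0 ≤ h) : 0 ≤ phiIntegrand hs μ h :=
  div_nonneg (le_max_right _ _) (by positivity)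

theorem phiIntegrand_le (hhs : 0 < hs) (hμ : 0 < μ) (hh : 0 < h) :
    phiIntegrand hs μ h ≤ 1 / (hs * μ) := by
  rw [phiIntegrand, div_le_div_iff₀ (by positivity) (by positivity), one_mul,
    max_mul_of_nonneg _ _ (by positivity), zero_mul]
  refine max_le ?_ (by positivity)
  rw [sub_mul, div_mul_eq_mul_div, mul_div_assoc, mul_div_cancel_left₀ _ hhs.ne']
  nlinarith [mul_pos hhs hμ]

theorem psiIntegrand_nonneg : 0 ≤ psiIntegrand hs μ h :=
  Real.log_nonneg (le_max_left _ _)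

theorem psiIntegrand_le (hμ : 0 ≤ μ) (hh : 0 ≤ h) : psiIntegrand hs μ h ≤ μ * h := by
  have h_arg : max 1 (min 1 (h / hs) + μ * h) ≤ 1 + μ * h :=
    max_le (by nlinarith [mul_nonneg hμ hh]) (by gcongr; exact min_le_left _ _)
  calc psiIntegrand hs μ h ≤ Real.log (1 + μ * h) :=
        Real.log_le_log (by positivity) h_arg
    _ ≤ μ * h := by linarith [Real.log_le_sub_one_of_pos (by positivity : 0 < 1 + μ * h)]

theorem psiIntegrand_eq_zero_of_le_div (hhs : 0 < hs) (hμ : 0 ≤ μ)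
    (h_le : h ≤ hs / (1 + μ * hs)) : psiIntegrand hs μ h = 0 := by
  have h_le' : h * (1 + μ * hs) ≤ hs := (le_div_iff₀ (by positivity)).1 h_le
  rw [psiIntegrand, max_eq_left, Real.log_one]
  calc min 1 (h / hs) + μ * h ≤ h / hs + μ * h := by gcongr; exact min_le_right _ _
    _ = h * (1 + μ * hs) / hs := by field_simp
    _ ≤ 1 := (div_le_one hhs).2 h_le'

theorem psiIntegrand_eq_of_div_lt_of_le (hhs : 0 < hs) (hμ : 0 ≤ μ)
    (h_lt : hs / (1 + μ * hs) < h) (h_le : h ≤ hs) :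
    psiIntegrand hs μ h = Real.log (h * (1 + μ * hs) / hs) := by
  have h_lt' : hs < h * (1 + μ * hs) := (div_lt_iff₀ (by positivity)).1 h_lt
  have h_eq : min 1 (h / hs) + μ * h = h * (1 + μ * hs) / hs := by
    rw [min_eq_right ((div_le_one hhs).2 h_le)]
    field_simp
  rw [psiIntegrand, h_eq, max_eq_right ((one_le_div hhs).2 h_lt'.le)]

theorem psiIntegrand_eq_of_le (hhs : 0 < hs) (hμ : 0 ≤ μ) (h_le : hs ≤ h) :
    psiIntegrand hs μ h = Real.log (1 + μ * h) := by
  have : 0 ≤ μ * h := mul_nonneg hμ (hhs.le.trans h_le)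
  rw [psiIntegrand, min_eq_left ((one_le_div hhs).2 h_le), max_eq_right (by linarith)]

theorem phiIntegrand_anti_left {h₁ h₂ : ℝ} (hh₁ : 0 < h₁) (h₁₂ : h₁ ≤ h₂) (hμ : 0 ≤ μ)
    (hh : 0 ≤ h) : phiIntegrand h₂ μ h ≤ phiIntegrand h₁ μ h := by
  unfold phiIntegrand; gcongr

theorem phiIntegrand_lt_left {h₁ h₂ : ℝ} (hh₁ : 0 < h₁) (h₁₂ : h₁ < h₂) (hμ : 0 ≤ μ)
    (hh : h₁ < h) : phiIntegrand h₂ μ h < phiIntegrand h₁ μ h := by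
  have h_pos : 0 < h := hh₁.trans hh
  have h_gt : 1 < h / h₁ := (one_lt_div hh₁).2 hh
  have h_max : max (h / h₁ - 1) 0 = h / h₁ - 1 := max_eq_left (by linarith)
  unfold phiIntegrand
  rw [h_max]
  gcongr
  exact max_lt (by gcongr) (by linarith)

theorem phiIntegrand_anti_right {μ₁ μ₂ : ℝ} (hμ₁ : 0 ≤ μ₁) (hμ₁₂ : μ₁ ≤ μ₂) (hh : 0 ≤ h) :
    phiIntegrand hs μ₂ h ≤ phiIntegrand hs μ₁ h := by
  unfold phiIntegrand; gcongr

theorem phiIntegrand_lt_right {μ₁ μ₂ : ℝ} (hhs : 0 < hs) (hμ₁ : 0 ≤ μ₁) (hμ₁₂ : μ₁ < μ₂)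
    (hh : hs < h) : phiIntegrand hs μ₂ h < phiIntegrand hs μ₁ h := by
  have h_pos : 0 < h := hhs.trans hh
  unfold phiIntegrand
  rw [max_eq_left (by rw [sub_nonneg, one_le_div hhs]; exact hh.le)]
  gcongr
  rw [sub_pos, one_lt_div hhs]; exact hh

theorem psiIntegrand_anti_left {h₁ h₂ : ℝ} (hh₁ : 0 < h₁) (h₁₂ : h₁ ≤ h₂) (hh : 0 ≤ h) :
    psiIntegrand h₂ μ h ≤ psiIntegrand h₁ μ h := by
  unfold psiIntegrand; gcongr

theorem psiIntegrand_lt_left {h₁ h₂ : ℝ} (hh₁ : 0 < h₁) (hμ : 0 < μ) (hh : h ∈ Ioo h₁ h₂) :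
    psiIntegrand h₂ μ h < psiIntegrand h₁ μ h := by
  have h_pos : 0 < h := hh₁.trans hh.1
  have : h / h₂ < 1 := (div_lt_one (h_pos.trans hh.2)).2 hh.2
  rw [psiIntegrand_eq_of_le hh₁ hμ.le hh.1.le, psiIntegrand]
  gcongr
  exact max_lt (by nlinarith [mul_pos hμ h_pos]) (by gcongr; exact min_lt_of_right_lt this)

theorem psiIntegrand_mono_right {μ₁ μ₂ : ℝ} (hμ₁₂ : μ₁ ≤ μ₂) (hh : 0 ≤ h) :
    psiIntegrand hs μ₁ h ≤ psiIntegrand hs μ₂ h := by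
  unfold psiIntegrand; gcongr

theorem psiIntegrand_lt_right {μ₁ μ₂ : ℝ} (hhs : 0 < hs) (hμ₁ : 0 ≤ μ₁) (hμ₁₂ : μ₁ < μ₂)
    (hh : hs < h) : psiIntegrand hs μ₁ h < psiIntegrand hs μ₂ h := by
  have h_pos : 0 < h := hhs.trans hh
  rw [psiIntegrand_eq_of_le hhs hμ₁ hh.le, psiIntegrand_eq_of_le hhs (hμ₁.trans hμ₁₂.le) hh.le]
  gcongr

end Integrands

section Integrals

variable {p : ℝ → ℝ} {hs μ : ℝ}

theorem Phi_eq_setIntegral_phiIntegrand (hhs : 0 < hs) (hμ : 0 ≤ μ) :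
    Phi p hs μ = ∫ h in Ioi 0, phiIntegrand hs μ h * p h := by
  rw [setIntegral_eq_of_subset_of_forall_sdiff_eq_zero measurableSet_Ioi
    (Ioi_subset_Ioi hhs.le) fun h hh => by
      rw [phiIntegrand_eq_zero_of_le hhs (not_lt.1 hh.2), zero_mul]]
  exact setIntegral_congr_fun measurableSet_Ioi fun h hh => by
    rw [phiIntegrand_eq_of_lt hhs hμ hh]

theorem integrableOn_phiIntegrand_mul (hp : IntegrableOn p (Ioi 0)) (hhs : 0 < hs)
    (hμ : 0 < μ) : IntegrableOn (fun h => phiIntegrand hs μ h * p h) (Ioi 0) :=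
  hp.bdd_mul (c := 1 / (hs * μ)) measurable_phiIntegrand.aestronglyMeasurable <|
    (ae_restrict_iff' measurableSet_Ioi).2 <| ae_of_all _ fun h (hh : 0 < h) => by
      rw [Real.norm_of_nonneg (phiIntegrand_nonneg hμ.le hh.le)]
      exact phiIntegrand_le hhs hμ hh

theorem integrableOn_psiIntegrand_mul (hp : IntegrableOn p (Ioi 0))
    (hp_mean : IntegrableOn (fun h => h * p h) (Ioi 0)) (hμ : 0 ≤ μ) :
    IntegrableOn (fun h => psiIntegrand hs μ h * p h) (Ioi 0) := by
  refine Integrable.mono' (hp_mean.norm.const_mul μ)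
    (measurable_psiIntegrand.aestronglyMeasurable.mul hp.aestronglyMeasurable) <|
    (ae_restrict_iff' measurableSet_Ioi).2 <| ae_of_all _ fun h (hh : 0 < h) => ?_
  rw [norm_mul, norm_mul, Real.norm_of_nonneg psiIntegrand_nonneg, Real.norm_of_nonneg hh.le,
    ← mul_assoc]
  gcongr
  exact psiIntegrand_le hμ hh.le

theorem Psi_eq_setIntegral_psiIntegrand (hp : IntegrableOn p (Ioi 0))
    (hp_mean : IntegrableOn (fun h => h * p h) (Ioi 0)) (hhs : 0 < hs) (hμ : 0 ≤ μ) :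
    Psi p hs μ = ∫ h in Ioi 0, psiIntegrand hs μ h * p h := by
  set a := hs / (1 + μ * hs)
  have ha : 0 < a := by positivity
  have has : a ≤ hs := div_le_self hhs.le (by nlinarith)
  have hint := integrableOn_psiIntegrand_mul (hs := hs) hp hp_mean hμ
  have h_zero :
      ∫ h in Ioi 0, psiIntegrand hs μ h * p h = ∫ h in Ioi a, psiIntegrand hs μ h * p h :=
    setIntegral_eq_of_subset_of_forall_sdiff_eq_zero measurableSet_Ioi (Ioi_subset_Ioi ha.le)
      fun h hh => by rw [psiIntegrand_eq_zero_of_le_div hhs hμ (not_lt.1 hh.2), zero_mul]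
  have h_split : ∫ h in Ioi a, psiIntegrand hs μ h * p h =
      (∫ h in Ioo a hs, psiIntegrand hs μ h * p h) + ∫ h in Ioi hs, psiIntegrand hs μ h * p h := by
    rw [← integral_Ioc_eq_integral_Ioo,
      ← setIntegral_union Ioc_disjoint_Ioi_same measurableSet_Ioi
        (hint.mono_set (Ioc_subset_Ioi_self.trans (Ioi_subset_Ioi ha.le)))
        (hint.mono_set (Ioi_subset_Ioi (ha.le.trans has))), Ioc_union_Ioi_eq_Ioi has]
  rw [h_zero, h_split, Psi]
  congr 1
  · exact setIntegral_congr_fun measurableSet_Ioo fun h hh => by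
      rw [psiIntegrand_eq_of_div_lt_of_le hhs hμ hh.1 hh.2.le]
  · exact setIntegral_congr_fun measurableSet_Ioi fun h hh => by
      rw [psiIntegrand_eq_of_le hhs hμ hh.le]

theorem Phi_strictAntiOn_left (hp : IntegrableOn p (Ioi 0)) (hp_pos : ∀ h, 0 < h → 0 < p h)
    (hμ : 0 < μ) : StrictAntiOn (Phi p · μ) (Ioi 0) := by
  intro h₁ (hh₁ : 0 < h₁) h₂ (hh₂ : 0 < h₂) h₁₂
  show Phi p h₂ μ < Phi p h₁ μ
  rw [Phi_eq_setIntegral_phiIntegrand hh₂ hμ.le, Phi_eq_setIntegral_phiIntegrand hh₁ hμ.le]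
  exact setIntegral_mul_lt_setIntegral_mul measurableSet_Ioi
    (integrableOn_phiIntegrand_mul hp hh₂ hμ) (integrableOn_phiIntegrand_mul hp hh₁ hμ) hp_pos
    (fun h hh => phiIntegrand_anti_left hh₁ h₁₂.le hμ.le (le_of_lt hh))
    (Ioi_subset_Ioi hh₁.le) (by simp) fun h hh => phiIntegrand_lt_left hh₁ h₁₂ hμ.le hh

theorem Phi_strictAntiOn_right (hp : IntegrableOn p (Ioi 0)) (hp_pos : ∀ h, 0 < h → 0 < p h)
    (hhs : 0 < hs) : StrictAntiOn (Phi p hs) (Ioi 0) := by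
  intro μ₁ (hμ₁ : 0 < μ₁) μ₂ (hμ₂ : 0 < μ₂) μ₁₂
  rw [Phi_eq_setIntegral_phiIntegrand hhs hμ₂.le, Phi_eq_setIntegral_phiIntegrand hhs hμ₁.le]
  exact setIntegral_mul_lt_setIntegral_mul measurableSet_Ioi
    (integrableOn_phiIntegrand_mul hp hhs hμ₂) (integrableOn_phiIntegrand_mul hp hhs hμ₁) hp_pos
    (fun h hh => phiIntegrand_anti_right hμ₁.le μ₁₂.le (le_of_lt hh))
    (Ioi_subset_Ioi hhs.le) (by simp) fun h hh => phiIntegrand_lt_right hhs hμ₁.le μ₁₂ hh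

theorem Psi_strictAntiOn_left (hp : IntegrableOn p (Ioi 0))
    (hp_mean : IntegrableOn (fun h => h * p h) (Ioi 0)) (hp_pos : ∀ h, 0 < h → 0 < p h)
    (hμ : 0 < μ) : StrictAntiOn (Psi p · μ) (Ioi 0) := by
  intro h₁ (hh₁ : 0 < h₁) h₂ (hh₂ : 0 < h₂) h₁₂
  show Psi p h₂ μ < Psi p h₁ μ
  rw [Psi_eq_setIntegral_psiIntegrand hp hp_mean hh₂ hμ.le,
    Psi_eq_setIntegral_psiIntegrand hp hp_mean hh₁ hμ.le]
  exact setIntegral_mul_lt_setIntegral_mul measurableSet_Ioi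
    (integrableOn_psiIntegrand_mul hp hp_mean hμ.le)
    (integrableOn_psiIntegrand_mul hp hp_mean hμ.le) hp_pos
    (fun h hh => psiIntegrand_anti_left hh₁ h₁₂.le (le_of_lt hh))
    (Ioo_subset_Ioi_self.trans (Ioi_subset_Ioi hh₁.le)) (by simp [h₁₂])
    fun h hh => psiIntegrand_lt_left hh₁ hμ hh

theorem Psi_strictMonoOn_right (hp : IntegrableOn p (Ioi 0))
    (hp_mean : IntegrableOn (fun h => h * p h) (Ioi 0)) (hp_pos : ∀ h, 0 < h → 0 < p h)
    (hhs : 0 < hs) : StrictMonoOn (Psi p hs) (Ioi 0) := by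
  intro μ₁ (hμ₁ : 0 < μ₁) μ₂ (hμ₂ : 0 < μ₂) μ₁₂
  rw [Psi_eq_setIntegral_psiIntegrand hp hp_mean hhs hμ₂.le,
    Psi_eq_setIntegral_psiIntegrand hp hp_mean hhs hμ₁.le]
  exact setIntegral_mul_lt_setIntegral_mul measurableSet_Ioi
    (integrableOn_psiIntegrand_mul hp hp_mean hμ₁.le)
    (integrableOn_psiIntegrand_mul hp hp_mean hμ₂.le) hp_pos
    (fun h hh => psiIntegrand_mono_right μ₁₂.le (le_of_lt hh))
    (Ioi_subset_Ioi hhs.le) (by simp) fun h hh => psiIntegrand_lt_right hhs hμ₁.le μ₁₂ hh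

end Integrals

theorem stmt4_general
    (p : ℝ → ℝ) (σ : ℝ)
    (hp_pos : ∀ h, 0 < h → 0 < p h)
    (hp_int : IntegrableOn p (Ioi (0 : ℝ)))
    (hp_mean : IntegrableOn (fun h => h * p h) (Ioi (0 : ℝ)))
    (JM R : ℝ)
    (h₁ μ₁ h₂ μ₂ : ℝ) (hh₁ : 0 < h₁) (hμ₁ : 0 < μ₁) (hh₂ : 0 < h₂) (hμ₂ : 0 < μ₂)
    (hΦ₁ : Phi p h₁ μ₁ = JM / σ) (hΨ₁ : Psi p h₁ μ₁ = R)
    (hΦ₂ : Phi p h₂ μ₂ = JM / σ) (hΨ₂ : Psi p h₂ μ₂ = R) :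
    h₁ = h₂ ∧ μ₁ = μ₂ := by
  have h_inj := injOn_of_antitoneOn_strictAntiOn_strictMonoOn (F := Phi p) (G := Psi p)
    (fun _ hμ => (Phi_strictAntiOn_left hp_int hp_pos hμ).antitoneOn)
    (fun _ hhs => Phi_strictAntiOn_right hp_int hp_pos hhs)
    (fun _ hμ => Psi_strictAntiOn_left hp_int hp_mean hp_pos hμ)
    (fun _ hhs => Psi_strictMonoOn_right hp_int hp_mean hp_pos hhs)
  exact Prod.ext_iff.1 <| h_inj (mk_mem_prod hh₁ hμ₁) (mk_mem_prod hh₂ hμ₂) <| by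
    simp only [hΦ₁, hΨ₁, hΦ₂, hΨ₂]

/-- for every `J_M > 0` and `R > 0` there is at most one pair
`(h*, μ) ∈ (0,∞) × (0,∞)` with `Φ(h*, μ) = J_M/σ²` and `Ψ(h*, μ) = R`. -/
theorem stmt4
    (p : ℝ → ℝ) (σ : ℝ) (hσ : 0 < σ)
    (hp_cont : ContinuousOn p (Ioi 0)) (hp_pos : ∀ h, 0 < h → 0 < p h)
    (hp_int : IntegrableOn p (Ioi (0 : ℝ))) (hp_one : (∫ h in Ioi (0 : ℝ), p h) = 1)
    (hp_mean : IntegrableOn (fun h => h * p h) (Ioi (0 : ℝ)))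
    (JM R : ℝ) (hJM : 0 < JM) (hR : 0 < R)
    (h₁ μ₁ h₂ μ₂ : ℝ) (hh₁ : 0 < h₁) (hμ₁ : 0 < μ₁) (hh₂ : 0 < h₂) (hμ₂ : 0 < μ₂)
    (hΦ₁ : Phi p h₁ μ₁ = JM / σ) (hΨ₁ : Psi p h₁ μ₁ = R)
    (hΦ₂ : Phi p h₂ μ₂ = JM / σ) (hΨ₂ : Psi p h₂ μ₂ = R) :
    h₁ = h₂ ∧ μ₁ = μ₂ :=
  stmt4_general p σ hp_pos hp_int hp_mean JM R h₁ μ₁ h₂ μ₂ hh₁ hμ₁ hh₂ hμ₂ hΦ₁ hΨ₁ hΦ₂ hΨ₂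
end

section
/- For every fixed μ > 0 the function h* ↦ Φ(h*, μ) is strictly decreasing on (0,∞), and for every fixed h* > 0 the function μ ↦ Φ(h*, μ) is strictly decreasing on (0,∞). For every fixed μ > 0 the function h* ↦ Ψ(h*, μ) is strictly decreasing on (0,∞), and for every fixed h* > 0 the function μ ↦ Ψ(h*, μ) is strictly increasing on (0,∞). -/
open MeasureTheory Set

/-- Unified integrand for `Φ` over all of `(0,∞)`. -/
noncomputable def Fphi (hstar μ h : ℝ) : ℝ :=
  max 0 (h * (1 + μ * hstar) / (hstar * (1 + μ * h)) - 1)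

/-- Unified integrand for `Ψ` over all of `(0,∞)`. -/
noncomputable def Fpsi (hstar μ h : ℝ) : ℝ :=
  Real.log (max 1 (min (h * (1 + μ * hstar) / hstar) (1 + μ * h)))

lemma Fphi_of_le {hs μ h : ℝ} (hhs : 0 < hs) (hμ : 0 < μ) (h0 : 0 < h) (hle : h ≤ hs) :
    Fphi hs μ h = 0 := by
  have hd : 0 < hs * (1 + μ * h) := by positivity
  have he : h * (1 + μ * hs) / (hs * (1 + μ * h)) ≤ 1 := by
    rw [div_le_one hd]; nlinarith
  exact max_eq_left (by linarith)

lemma Fphi_of_gt {hs μ h : ℝ} (hhs : 0 < hs) (hμ : 0 < μ) (hlt : hs < h) :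
    Fphi hs μ h = h * (1 + μ * hs) / (hs * (1 + μ * h)) - 1 := by
  have h0 : 0 < h := hhs.trans hlt
  have hd : 0 < hs * (1 + μ * h) := by positivity
  have he : 1 ≤ h * (1 + μ * hs) / (hs * (1 + μ * h)) := by
    rw [le_div_iff₀ hd]; nlinarith
  exact max_eq_right (by linarith)

lemma Fpsi_arg_pos (hs μ h : ℝ) :
    (0 : ℝ) < max 1 (min (h * (1 + μ * hs) / hs) (1 + μ * h)) :=
  lt_of_lt_of_le one_pos (le_max_left _ _)

lemma Fpsi_of_le {hs μ h : ℝ} (hhs : 0 < hs) (hμ : 0 < μ) (hle : h ≤ hs / (1 + μ * hs)) :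
    Fpsi hs μ h = 0 := by
  have h1 : 0 < 1 + μ * hs := by positivity
  have hA : h * (1 + μ * hs) / hs ≤ 1 := by
    rw [div_le_one hhs]
    have := (le_div_iff₀ h1).mp hle
    linarith
  have hm : min (h * (1 + μ * hs) / hs) (1 + μ * h) ≤ 1 :=
    le_trans (min_le_left _ _) hA
  rw [Fpsi, max_eq_left hm, Real.log_one]

lemma Fpsi_of_mid {hs μ h : ℝ} (hhs : 0 < hs) (hμ : 0 < μ) (h0 : 0 < h)
    (hgt : hs / (1 + μ * hs) < h) (hle : h ≤ hs) :
    Fpsi hs μ h = Real.log (h * (1 + μ * hs) / hs) := by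
  have h1 : 0 < 1 + μ * hs := by positivity
  have hmin : h * (1 + μ * hs) / hs ≤ 1 + μ * h := by
    rw [div_le_iff₀ hhs]; nlinarith
  have hA : 1 ≤ h * (1 + μ * hs) / hs := by
    rw [le_div_iff₀ hhs]
    have := (div_lt_iff₀ h1).mp hgt
    linarith
  rw [Fpsi, min_eq_left hmin, max_eq_right hA]

lemma Fpsi_of_gt {hs μ h : ℝ} (hhs : 0 < hs) (hμ : 0 < μ) (hlt : hs < h) :
    Fpsi hs μ h = Real.log (1 + μ * h) := by
  have h0 : 0 < h := hhs.trans hlt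
  have hmin : 1 + μ * h ≤ h * (1 + μ * hs) / hs := by
    rw [le_div_iff₀ hhs]; nlinarith
  have hB : 1 ≤ 1 + μ * h := by nlinarith
  rw [Fpsi, min_eq_right hmin, max_eq_right hB]

lemma Fphi_mul_integrable (p : ℝ → ℝ) (hp_cont : ContinuousOn p (Ioi 0))
    (hp_pos : ∀ h, 0 < h → 0 < p h) (hp_int : IntegrableOn p (Ioi (0 : ℝ)))
    {hs μ : ℝ} (hhs : 0 < hs) (hμ : 0 < μ) :
    IntegrableOn (fun h => Fphi hs μ h * p h) (Ioi (0 : ℝ)) := by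
  set C : ℝ := (1 + μ * hs) / (hs * μ) with hC
  have hC0 : 0 < C := by positivity
  have hcF : ContinuousOn (fun h => Fphi hs μ h) (Ioi 0) := by
    refine ContinuousOn.sup continuousOn_const ?_
    apply ContinuousOn.sub _ continuousOn_const
    apply ContinuousOn.div (by fun_prop) (by fun_prop)
    intro x hx
    have hx0 : (0 : ℝ) < x := hx
    positivity
  refine Integrable.mono' (hp_int.const_mul C)
    ((hcF.mul hp_cont).aestronglyMeasurable measurableSet_Ioi) ?_
  rw [ae_restrict_iff' measurableSet_Ioi]
  refine ae_of_all _ fun h hh => ?_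
  have h0 : (0 : ℝ) < h := hh
  have hp0 : 0 < p h := hp_pos h h0
  have hFnn : 0 ≤ Fphi hs μ h := le_max_left _ _
  have hFle : Fphi hs μ h ≤ C := by
    refine max_le hC0.le ?_
    have he : h * (1 + μ * hs) / (hs * (1 + μ * h)) ≤ C := by
      rw [hC, div_le_div_iff₀ (by positivity) (by positivity)]
      nlinarith [mul_pos hhs (show (0:ℝ) < 1 + μ * hs by positivity)]
    linarith
  rw [Real.norm_eq_abs, abs_of_nonneg (mul_nonneg hFnn hp0.le)]
  exact mul_le_mul_of_nonneg_right hFle hp0.le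

lemma Fpsi_mul_integrable (p : ℝ → ℝ) (hp_cont : ContinuousOn p (Ioi 0))
    (hp_pos : ∀ h, 0 < h → 0 < p h)
    (hp_mean : IntegrableOn (fun h => h * p h) (Ioi (0 : ℝ)))
    {hs μ : ℝ} (hhs : 0 < hs) (hμ : 0 < μ) :
    IntegrableOn (fun h => Fpsi hs μ h * p h) (Ioi (0 : ℝ)) := by
  have c1 : Continuous (fun h : ℝ => h * (1 + μ * hs) / hs) := by continuity
  have c2 : Continuous (fun h : ℝ => 1 + μ * h) := by continuity
  have cF : Continuous (fun h : ℝ => Fpsi hs μ h) := by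
    apply Continuous.log (continuous_const.max (c1.min c2))
    intro x
    exact (Fpsi_arg_pos hs μ x).ne'
  refine Integrable.mono' (hp_mean.const_mul μ)
    ((cF.continuousOn.mul hp_cont).aestronglyMeasurable measurableSet_Ioi) ?_
  rw [ae_restrict_iff' measurableSet_Ioi]
  refine ae_of_all _ fun h hh => ?_
  have h0 : (0 : ℝ) < h := hh
  have hp0 : 0 < p h := hp_pos h h0
  have hFnn : 0 ≤ Fpsi hs μ h := Real.log_nonneg (le_max_left _ _)
  have hFle : Fpsi hs μ h ≤ μ * h := by
    have hle1 : max 1 (min (h * (1 + μ * hs) / hs) (1 + μ * h)) ≤ 1 + μ * h :=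
      max_le (by nlinarith) (min_le_right _ _)
    have := Real.log_le_sub_one_of_pos (show (0:ℝ) < 1 + μ * h by positivity)
    calc Fpsi hs μ h ≤ Real.log (1 + μ * h) :=
          Real.log_le_log (Fpsi_arg_pos hs μ h) hle1
      _ ≤ μ * h := by linarith
  rw [Real.norm_eq_abs, abs_of_nonneg (mul_nonneg hFnn hp0.le)]
  calc Fpsi hs μ h * p h ≤ (μ * h) * p h := mul_le_mul_of_nonneg_right hFle hp0.le
    _ = μ * (h * p h) := by ring

lemma Phi_eq (p : ℝ → ℝ) (hp_cont : ContinuousOn p (Ioi 0))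
    (hp_pos : ∀ h, 0 < h → 0 < p h) (hp_int : IntegrableOn p (Ioi (0 : ℝ)))
    {hs μ : ℝ} (hhs : 0 < hs) (hμ : 0 < μ) :
    Phi p hs μ = ∫ h in Ioi (0 : ℝ), Fphi hs μ h * p h := by
  have hint := Fphi_mul_integrable p hp_cont hp_pos hp_int hhs hμ
  have hsplit : Ioc (0 : ℝ) hs ∪ Ioi hs = Ioi 0 := Ioc_union_Ioi_eq_Ioi hhs.le
  have h1 : ∫ h in Ioc (0 : ℝ) hs, Fphi hs μ h * p h = 0 := by
    rw [setIntegral_congr_fun measurableSet_Ioc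
      (g := fun _ => (0 : ℝ)) (fun h hh => by simp [Fphi_of_le hhs hμ hh.1 hh.2])]
    simp
  have h2 : ∫ h in Ioi hs, Fphi hs μ h * p h
      = ∫ h in Ioi hs, (h * (1 + μ * hs) / (hs * (1 + μ * h)) - 1) * p h := by
    refine setIntegral_congr_fun measurableSet_Ioi fun h hh => ?_
    rw [Fphi_of_gt hhs hμ hh]
  rw [Phi, ← hsplit, setIntegral_union (Ioc_disjoint_Ioi le_rfl) measurableSet_Ioi
      (hint.mono_set (by rw [← hsplit]; exact subset_union_left))
      (hint.mono_set (by rw [← hsplit]; exact subset_union_right)), h1, h2, zero_add]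

lemma Psi_eq (p : ℝ → ℝ) (hp_cont : ContinuousOn p (Ioi 0))
    (hp_pos : ∀ h, 0 < h → 0 < p h)
    (hp_mean : IntegrableOn (fun h => h * p h) (Ioi (0 : ℝ)))
    {hs μ : ℝ} (hhs : 0 < hs) (hμ : 0 < μ) :
    Psi p hs μ = ∫ h in Ioi (0 : ℝ), Fpsi hs μ h * p h := by
  have hint := Fpsi_mul_integrable p hp_cont hp_pos hp_mean hhs hμ
  have h1pos : 0 < 1 + μ * hs := by positivity
  set a : ℝ := hs / (1 + μ * hs) with ha
  have ha0 : 0 < a := by positivity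
  have hahs : a < hs := by
    rw [ha, div_lt_iff₀ h1pos]; nlinarith [mul_pos (mul_pos hμ hhs) hhs]
  have hsplit : (Ioc (0 : ℝ) a ∪ Ioc a hs) ∪ Ioi hs = Ioi 0 := by
    rw [Ioc_union_Ioc_eq_Ioc ha0.le hahs.le, Ioc_union_Ioi_eq_Ioi hhs.le]
  have hd1 : Disjoint (Ioc (0 : ℝ) a) (Ioc a hs) := by
    rw [Set.disjoint_left]; intro x hx hx'; exact absurd hx.2 (not_le.mpr hx'.1)
  have hd2 : Disjoint (Ioc (0 : ℝ) a ∪ Ioc a hs) (Ioi hs) := by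
    refine Disjoint.union_left ?_ (Ioc_disjoint_Ioi le_rfl)
    exact (Ioc_disjoint_Ioi le_rfl).mono_left (Ioc_subset_Ioc_right hahs.le)
  have hsub1 : Ioc (0 : ℝ) a ⊆ Ioi 0 := Ioc_subset_Ioi_self
  have hsub2 : Ioc a hs ⊆ Ioi 0 := fun x hx => lt_trans ha0 hx.1
  have hsub3 : Ioi hs ⊆ Ioi (0 : ℝ) := Ioi_subset_Ioi hhs.le
  have e1 : ∫ h in Ioc (0 : ℝ) a, Fpsi hs μ h * p h = 0 := by
    rw [setIntegral_congr_fun measurableSet_Ioc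
      (g := fun _ => (0 : ℝ)) (fun h hh => by simp [Fpsi_of_le hhs hμ hh.2])]
    simp
  have e2 : ∫ h in Ioc a hs, Fpsi hs μ h * p h
      = ∫ h in Ioo a hs, Real.log (h * (1 + μ * hs) / hs) * p h := by
    rw [setIntegral_congr_fun measurableSet_Ioc
      (g := fun h => Real.log (h * (1 + μ * hs) / hs) * p h)
      (fun h hh => by rw [Fpsi_of_mid hhs hμ (lt_trans ha0 hh.1) hh.1 hh.2])]
    exact integral_Ioc_eq_integral_Ioo
  have e3 : ∫ h in Ioi hs, Fpsi hs μ h * p h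
      = ∫ h in Ioi hs, Real.log (1 + μ * h) * p h := by
    refine setIntegral_congr_fun measurableSet_Ioi fun h hh => ?_
    rw [Fpsi_of_gt hhs hμ hh]
  rw [Psi, ← hsplit,
    setIntegral_union hd2 measurableSet_Ioi
      (hint.mono_set (by rw [← hsplit]; exact subset_union_left))
      (hint.mono_set (by rw [← hsplit]; exact subset_union_right)),
    setIntegral_union hd1 measurableSet_Ioc
      (hint.mono_set hsub1) (hint.mono_set hsub2),
    e1, e2, e3, zero_add, ← ha]

lemma integral_lt_integral_Ioi {f g : ℝ → ℝ}
    (hf : IntegrableOn f (Ioi (0 : ℝ))) (hg : IntegrableOn g (Ioi (0 : ℝ)))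
    (hle : ∀ x ∈ Ioi (0 : ℝ), f x ≤ g x)
    {c d : ℝ} (hc : 0 < c) (hcd : c < d)
    (hlt : ∀ x ∈ Ioo c d, f x < g x) :
    ∫ x in Ioi (0 : ℝ), f x < ∫ x in Ioi (0 : ℝ), g x := by
  have hsub : IntegrableOn (fun x => g x - f x) (Ioi (0 : ℝ)) := hg.sub hf
  have hnn : 0 ≤ᶠ[ae (volume.restrict (Ioi (0 : ℝ)))] fun x => g x - f x := by
    filter_upwards [ae_restrict_mem measurableSet_Ioi] with x hx
    exact sub_nonneg.2 (hle x hx)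
  have hpos : 0 < ∫ x in Ioi (0 : ℝ), (g x - f x) := by
    refine (setIntegral_pos_iff_support_of_nonneg_ae hnn hsub).mpr ?_
    refine lt_of_lt_of_le ?_ (measure_mono (show Ioo c d ⊆ _ from fun x hx =>
      ⟨sub_ne_zero.mpr (hlt x hx).ne', hc.trans hx.1⟩))
    rw [Real.volume_Ioo]
    exact ENNReal.ofReal_pos.mpr (by linarith)
  rw [integral_sub hg hf] at hpos
  linarith

/-- `Φ` is strictly decreasing in each variable on `(0, ∞)`, while
`Ψ` is strictly decreasing in `h*` and strictly increasing in `μ` on `(0, ∞)`. -/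
theorem stmt5
    (p : ℝ → ℝ) (σ : ℝ) (hσ : 0 < σ)
    (hp_cont : ContinuousOn p (Ioi 0)) (hp_pos : ∀ h, 0 < h → 0 < p h)
    (hp_int : IntegrableOn p (Ioi (0 : ℝ))) (hp_one : (∫ h in Ioi (0 : ℝ), p h) = 1)
    (hp_mean : IntegrableOn (fun h => h * p h) (Ioi (0 : ℝ))) :
    (∀ μ : ℝ, 0 < μ → StrictAntiOn (fun hstar => Phi p hstar μ) (Ioi 0)) ∧
    (∀ hstar : ℝ, 0 < hstar → StrictAntiOn (fun μ => Phi p hstar μ) (Ioi 0)) ∧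
    (∀ μ : ℝ, 0 < μ → StrictAntiOn (fun hstar => Psi p hstar μ) (Ioi 0)) ∧
    (∀ hstar : ℝ, 0 < hstar → StrictMonoOn (fun μ => Psi p hstar μ) (Ioi 0)) := by
  refine ⟨?_, ?_, ?_, ?_⟩
  · -- Φ strictly decreasing in h*
    intro μ hμ x hx y hy hxy
    have hx0 : (0 : ℝ) < x := hx
    have hy0 : (0 : ℝ) < y := hy
    simp only
    rw [Phi_eq p hp_cont hp_pos hp_int hy0 hμ, Phi_eq p hp_cont hp_pos hp_int hx0 hμ]
    refine integral_lt_integral_Ioi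
      (Fphi_mul_integrable p hp_cont hp_pos hp_int hy0 hμ)
      (Fphi_mul_integrable p hp_cont hp_pos hp_int hx0 hμ)
      (fun h hh => ?_) hy0 (lt_add_one y) (fun h hh => ?_)
    · have h0 : (0 : ℝ) < h := hh
      have hp0 := hp_pos h h0
      refine mul_le_mul_of_nonneg_right ?_ hp0.le
      refine max_le_max le_rfl (sub_le_sub_right ?_ 1)
      rw [div_le_div_iff₀ (by positivity) (by positivity)]
      nlinarith [mul_nonneg (mul_nonneg h0.le (show (0:ℝ) ≤ 1 + μ * h by positivity))
        (show (0:ℝ) ≤ y - x by linarith)]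
    · have hyh : y < h := hh.1
      have h0 : (0 : ℝ) < h := hy0.trans hyh
      have hp0 := hp_pos h h0
      refine mul_lt_mul_of_pos_right ?_ hp0
      rw [Fphi_of_gt hy0 hμ hyh, Fphi_of_gt hx0 hμ (hxy.trans hyh)]
      have : h * (1 + μ * y) / (y * (1 + μ * h)) < h * (1 + μ * x) / (x * (1 + μ * h)) := by
        rw [div_lt_div_iff₀ (by positivity) (by positivity)]
        nlinarith [mul_pos (mul_pos h0 (show (0:ℝ) < 1 + μ * h by positivity))
          (show (0:ℝ) < y - x by linarith)]
      linarith
  · -- Φ strictly decreasing in μ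
    intro hs hhs μ₁ hμ₁ μ₂ hμ₂ hμμ
    have h1 : (0 : ℝ) < μ₁ := hμ₁
    have h2 : (0 : ℝ) < μ₂ := hμ₂
    simp only
    rw [Phi_eq p hp_cont hp_pos hp_int hhs h2, Phi_eq p hp_cont hp_pos hp_int hhs h1]
    refine integral_lt_integral_Ioi
      (Fphi_mul_integrable p hp_cont hp_pos hp_int hhs h2)
      (Fphi_mul_integrable p hp_cont hp_pos hp_int hhs h1)
      (fun h hh => ?_) hhs (lt_add_one hs) (fun h hh => ?_)
    · have h0 : (0 : ℝ) < h := hh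
      have hp0 := hp_pos h h0
      refine mul_le_mul_of_nonneg_right ?_ hp0.le
      rcases le_or_gt h hs with hcase | hcase
      · rw [Fphi_of_le hhs h2 h0 hcase, Fphi_of_le hhs h1 h0 hcase]
      · rw [Fphi_of_gt hhs h2 hcase, Fphi_of_gt hhs h1 hcase]
        have : h * (1 + μ₂ * hs) / (hs * (1 + μ₂ * h))
            ≤ h * (1 + μ₁ * hs) / (hs * (1 + μ₁ * h)) := by
          rw [div_le_div_iff₀ (by positivity) (by positivity)]
          nlinarith [mul_nonneg (mul_nonneg (mul_nonneg h0.le hhs.le)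
            (show (0:ℝ) ≤ μ₂ - μ₁ by linarith)) (show (0:ℝ) ≤ h - hs by linarith)]
        linarith
    · have hsh : hs < h := hh.1
      have h0 : (0 : ℝ) < h := hhs.trans hsh
      have hp0 := hp_pos h h0
      refine mul_lt_mul_of_pos_right ?_ hp0
      rw [Fphi_of_gt hhs h2 hsh, Fphi_of_gt hhs h1 hsh]
      have : h * (1 + μ₂ * hs) / (hs * (1 + μ₂ * h))
          < h * (1 + μ₁ * hs) / (hs * (1 + μ₁ * h)) := by
        rw [div_lt_div_iff₀ (by positivity) (by positivity)]
        nlinarith [mul_pos (mul_pos (mul_pos h0 hhs)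
          (show (0:ℝ) < μ₂ - μ₁ by linarith)) (show (0:ℝ) < h - hs by linarith)]
      linarith
  · -- Ψ strictly decreasing in h*
    intro μ hμ x hx y hy hxy
    have hx0 : (0 : ℝ) < x := hx
    have hy0 : (0 : ℝ) < y := hy
    simp only
    rw [Psi_eq p hp_cont hp_pos hp_mean hy0 hμ, Psi_eq p hp_cont hp_pos hp_mean hx0 hμ]
    refine integral_lt_integral_Ioi
      (Fpsi_mul_integrable p hp_cont hp_pos hp_mean hy0 hμ)
      (Fpsi_mul_integrable p hp_cont hp_pos hp_mean hx0 hμ)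
      (fun h hh => ?_) hx0 hxy (fun h hh => ?_)
    · have h0 : (0 : ℝ) < h := hh
      have hp0 := hp_pos h h0
      refine mul_le_mul_of_nonneg_right ?_ hp0.le
      refine Real.log_le_log (Fpsi_arg_pos y μ h) ?_
      refine max_le_max le_rfl (min_le_min ?_ le_rfl)
      rw [div_le_div_iff₀ hy0 hx0]
      nlinarith [mul_nonneg h0.le (show (0:ℝ) ≤ y - x by linarith)]
    · have hxh : x < h := hh.1
      have hhy : h < y := hh.2
      have h0 : (0 : ℝ) < h := hx0.trans hxh
      have hp0 := hp_pos h h0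
      refine mul_lt_mul_of_pos_right ?_ hp0
      rw [Fpsi_of_gt hx0 hμ hxh]
      have hB1 : (1 : ℝ) < 1 + μ * h := by nlinarith
      have hAB : h * (1 + μ * y) / y < 1 + μ * h := by
        rw [div_lt_iff₀ hy0]; nlinarith
      have harg : max 1 (min (h * (1 + μ * y) / y) (1 + μ * h)) < 1 + μ * h :=
        max_lt hB1 (lt_of_le_of_lt (min_le_left _ _) hAB)
      exact Real.log_lt_log (Fpsi_arg_pos y μ h) harg
  · -- Ψ strictly increasing in μ
    intro hs hhs μ₁ hμ₁ μ₂ hμ₂ hμμ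
    have h1 : (0 : ℝ) < μ₁ := hμ₁
    have h2 : (0 : ℝ) < μ₂ := hμ₂
    simp only
    rw [Psi_eq p hp_cont hp_pos hp_mean hhs h1, Psi_eq p hp_cont hp_pos hp_mean hhs h2]
    refine integral_lt_integral_Ioi
      (Fpsi_mul_integrable p hp_cont hp_pos hp_mean hhs h1)
      (Fpsi_mul_integrable p hp_cont hp_pos hp_mean hhs h2)
      (fun h hh => ?_) hhs (lt_add_one hs) (fun h hh => ?_)
    · have h0 : (0 : ℝ) < h := hh
      have hp0 := hp_pos h h0
      refine mul_le_mul_of_nonneg_right ?_ hp0.le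
      refine Real.log_le_log (Fpsi_arg_pos hs μ₁ h) ?_
      refine max_le_max le_rfl (min_le_min ?_ ?_)
      · exact (div_le_div_iff_of_pos_right hhs).mpr
          (by nlinarith [mul_nonneg (mul_nonneg h0.le hhs.le) (show (0:ℝ) ≤ μ₂ - μ₁ by linarith)])
      · nlinarith [mul_nonneg h0.le (show (0:ℝ) ≤ μ₂ - μ₁ by linarith)]
    · have hsh : hs < h := hh.1
      have h0 : (0 : ℝ) < h := hhs.trans hsh
      have hp0 := hp_pos h h0
      refine mul_lt_mul_of_pos_right ?_ hp0
      rw [Fpsi_of_gt hhs h1 hsh, Fpsi_of_gt hhs h2 hsh]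
      exact Real.log_lt_log (by positivity) (by nlinarith)
end

section
/- Assume in addition that g is continuous. Let v > 0 with g(2v) > 0, k_y ∈ [0,1], and let V be a random variable whose law is the mixture k_y·Uniform[0, g(2v)] + (1 − k_y)·δ₀, and set Y₀ = g⁻¹(V). Then for every nonnegative random variable X, independent of Y₀, with E[X] ≤ a ≤ g(2v), one has Pr{ X ≥ g(Y₀) } ≤ 1 − k_y·(1 − E[X]/g(2v)) ≤ 1 − k_y·(1 − a/g(2v)). -/
open MeasureTheory ProbabilityTheory Set

/-- The mixture law `k·Uniform[0,t] + (1−k)·δ₀` on `ℝ`. -/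
noncomputable def unifMix (k t : ℝ) : Measure ℝ :=
  ENNReal.ofReal k • ((ENNReal.ofReal t)⁻¹ • volume.restrict (Icc 0 t)) +
    ENNReal.ofReal (1 - k) • Measure.dirac 0

/-!
Since `g` is continuous with `g 0 = 0`, the intermediate value theorem gives `g (g⁻¹ x) = x`
for `x ∈ [0, g(2v)]`, so `g(Y₀) = V` almost surely and `X` is independent of `V`. By Fubini,
`Pr{V ≤ X} = E[F(X)]` for the distribution function `F` of `V`, and the mixture law satisfies
`F(x) ≤ k_y x / g(2v) + 1 - k_y` for `x ≥ 0`; taking expectations gives the bound.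
-/

theorem ContinuousOn.apply_sInf_setOf_le_apply_eq {g : ℝ → ℝ} {a b x : ℝ}
    (hg : ContinuousOn g (Ici a)) (hab : a ≤ b) (hx : x ∈ Icc (g a) (g b)) :
    g (sInf {y | a ≤ y ∧ x ≤ g y}) = x := by
  set S := {y | a ≤ y ∧ x ≤ g y}
  have hSbdd : BddBelow S := ⟨a, fun y hy => hy.1⟩
  have hm : sInf S ∈ S := (hg.preimage_isClosed_of_isClosed isClosed_Ici isClosed_Ici).csInf_mem
    ⟨b, hab, hx.2⟩ hSbdd
  -- the intermediate value theorem on `[a, sInf S]` produces a point of `S` below `sInf S`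
  obtain ⟨c, hc, hgc⟩ : x ∈ g '' Icc a (sInf S) :=
    intermediate_value_Icc hm.1 (hg.mono Icc_subset_Ici_self) ⟨hx.1, hm.2⟩
  have hcm : c = sInf S := le_antisymm hc.2 (csInf_le hSbdd ⟨hc.1, hgc.ge⟩)
  rwa [← hcm]

theorem ae_unifMix_mem_Icc (k : ℝ) {t : ℝ} (ht : 0 ≤ t) :
    ∀ᵐ y ∂(unifMix k t), y ∈ Icc 0 t := by
  have h0 : (0 : ℝ) ∉ (Icc 0 t)ᶜ := fun h => h ⟨le_rfl, ht⟩
  change unifMix k t (Icc 0 t)ᶜ = 0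
  simp only [unifMix, Measure.add_apply, Measure.smul_apply, smul_eq_mul,
    Measure.restrict_apply measurableSet_Icc.compl, compl_inter_self, measure_empty, mul_zero,
    Measure.dirac_apply' _ measurableSet_Icc.compl, indicator_of_notMem h0, add_zero]

theorem unifMix_Iic_le {k t x : ℝ} (hk : k ∈ Icc 0 1) (ht : 0 < t) (hx : 0 ≤ x) :
    unifMix k t (Iic x) ≤ ENNReal.ofReal (k / t * x + (1 - k)) := by
  obtain ⟨hk0, hk1⟩ := hk
  have h0 : (0 : ℝ) ∈ Iic x := hx
  have hvol : volume (Iic x ∩ Icc 0 t) ≤ ENNReal.ofReal x :=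
    (measure_mono fun y hy => ⟨hy.2.1, hy.1⟩ : _ ≤ volume (Icc 0 x)).trans_eq (by simp)
  calc unifMix k t (Iic x)
      = ENNReal.ofReal k * ((ENNReal.ofReal t)⁻¹ * volume (Iic x ∩ Icc 0 t)) +
          ENNReal.ofReal (1 - k) := by
        simp [unifMix, Measure.restrict_apply measurableSet_Iic, h0]
    _ ≤ ENNReal.ofReal k * ((ENNReal.ofReal t)⁻¹ * ENNReal.ofReal x) +
          ENNReal.ofReal (1 - k) := by
        gcongr
    _ = ENNReal.ofReal (k / t * x + (1 - k)) := by
        rw [← ENNReal.ofReal_inv_of_pos ht, ← ENNReal.ofReal_mul (inv_nonneg.2 ht.le),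
          ← ENNReal.ofReal_mul hk0, ← ENNReal.ofReal_add (by positivity) (by linarith)]
        ring_nf

theorem ProbabilityTheory.IndepFun.toReal_measure_setOf_le_le {Ω : Type*} [MeasurableSpace Ω]
    {P : Measure Ω} [IsProbabilityMeasure P] {X V : Ω → ℝ} (hXV : IndepFun X V P)
    (hV : AEMeasurable V P) (hX0 : ∀ᵐ ω ∂P, 0 ≤ X ω) (hXint : Integrable X P) {α β : ℝ}
    (hα : 0 ≤ α) (hβ : 0 ≤ β)
    (hcdf : ∀ x, 0 ≤ x → P.map V (Iic x) ≤ ENNReal.ofReal (α * x + β)) :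
    (P {ω | V ω ≤ X ω}).toReal ≤ α * ∫ ω, X ω ∂P + β := by
  have hX := hXint.aemeasurable
  have hS : MeasurableSet {p : ℝ × ℝ | p.2 ≤ p.1} :=
    measurableSet_le measurable_snd measurable_fst
  have hP : P {ω | V ω ≤ X ω} = ∫⁻ x, P.map V (Iic x) ∂(P.map X) := by
    calc P {ω | V ω ≤ X ω} = P.map (fun ω => (X ω, V ω)) {p | p.2 ≤ p.1} :=
          (Measure.map_apply_of_aemeasurable (hX.prodMk hV) hS).symm
      _ = ∫⁻ x, P.map V (Iic x) ∂(P.map X) := by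
          rw [hXV.map_prod_eq_prod_map_map hX hV, Measure.prod_apply hS]
          rfl
  have hint : ∫⁻ x, ENNReal.ofReal (α * x + β) ∂(P.map X) =
      ENNReal.ofReal (α * ∫ ω, X ω ∂P + β) := by
    have hf : Integrable (fun ω => α * X ω + β) P :=
      (hXint.const_mul α).add (integrable_const β)
    rw [lintegral_map' (by fun_prop) hX, ← ofReal_integral_eq_lintegral_ofReal hf
      (by filter_upwards [hX0] with ω h using add_nonneg (mul_nonneg hα h) hβ),
      integral_add (hXint.const_mul α) (integrable_const β), integral_const_mul]
    simp
  refine ENNReal.toReal_le_of_le_ofReal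
    (add_nonneg (mul_nonneg hα (integral_nonneg_of_ae hX0)) hβ) ?_
  rw [hP, ← hint]
  refine lintegral_mono_ae ?_
  filter_upwards [ae_map_iff hX measurableSet_Ici |>.mpr hX0] with x hx using hcdf x hx

theorem stmt10_general
    {Ω : Type*} [MeasurableSpace Ω] (P : Measure Ω) [IsProbabilityMeasure P]
    (g : ℝ → ℝ) (hg0 : g 0 = 0)
    (hg_cont : ContinuousOn g (Ici 0))
    (ginv : ℝ → ℝ) (hginv : ∀ x, ginv x = sInf {y : ℝ | 0 ≤ y ∧ x ≤ g y})
    (v : ℝ) (hv : 0 < v) (hgv : 0 < g (2 * v))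
    (ky : ℝ) (hky : ky ∈ Icc (0 : ℝ) 1)
    (V : Ω → ℝ) (hV : Measurable V) (hVlaw : P.map V = unifMix ky (g (2 * v)))
    (Y₀ : Ω → ℝ) (hY₀ : Y₀ = fun ω => ginv (V ω))
    (a : ℝ)
    (X : Ω → ℝ) (hXnonneg : ∀ ω, 0 ≤ X ω)
    (hXint : Integrable X P) (hEX : (∫ ω, X ω ∂P) ≤ a)
    (hindep : IndepFun X Y₀ P) :
    (P {ω | g (Y₀ ω) ≤ X ω}).toReal ≤ 1 - ky * (1 - (∫ ω, X ω ∂P) / g (2 * v)) ∧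
    1 - ky * (1 - (∫ ω, X ω ∂P) / g (2 * v)) ≤ 1 - ky * (1 - a / g (2 * v)) := by
  have hY₀_eq (ω : Ω) : Y₀ ω = sInf {y : ℝ | 0 ≤ y ∧ V ω ≤ g y} := by
    rw [hY₀]
    exact hginv _
  have hY₀_nonneg (ω : Ω) : 0 ≤ Y₀ ω := by
    rw [hY₀_eq]
    exact Real.sInf_nonneg fun y hy => hy.1
  have hgY : ∀ᵐ ω ∂P, g (Y₀ ω) = V ω := by
    filter_upwards [ae_of_ae_map hV.aemeasurable (hVlaw ▸ ae_unifMix_mem_Icc ky hgv.le)]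
      with ω hω
    rw [hY₀_eq]
    exact hg_cont.apply_sInf_setOf_le_apply_eq (b := 2 * v) (by linarith) (by rwa [hg0])
  have hXV : IndepFun X V P := by
    -- `g` need not be measurable on all of `ℝ`; clamped to `[0, ∞)` it is continuous
    have hφ : Continuous fun y => g (max y 0) :=
      hg_cont.comp_continuous (continuous_id.max continuous_const) fun y => le_max_right y 0
    refine (hindep.comp measurable_id hφ.measurable).congr .rfl ?_
    filter_upwards [hgY] with ω hω
    simp only [Function.comp_apply, max_eq_left (hY₀_nonneg ω), hω]
  have hsets : P {ω | g (Y₀ ω) ≤ X ω} = P {ω | V ω ≤ X ω} := by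
    refine measure_congr (Filter.eventuallyEq_set.2 ?_)
    filter_upwards [hgY] with ω hω
    rw [hω]
  constructor
  · calc (P {ω | g (Y₀ ω) ≤ X ω}).toReal
        ≤ ky / g (2 * v) * (∫ ω, X ω ∂P) + (1 - ky) := by
          rw [hsets]
          exact hXV.toReal_measure_setOf_le_le hV.aemeasurable (ae_of_all _ hXnonneg) hXint
            (div_nonneg hky.1 hgv.le) (by linarith [hky.2])
            fun x hx => hVlaw ▸ unifMix_Iic_le hky hgv hx
      _ = 1 - ky * (1 - (∫ ω, X ω ∂P) / g (2 * v)) := by ring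
  · have hky0 := hky.1
    gcongr

/-- if `g` is in addition continuous, `V` has law
`k_y·Uniform[0,g(2v)] + (1−k_y)·δ₀` and `Y₀ = g⁻¹(V)`, then for every nonnegative `X`
independent of `Y₀` with `E[X] ≤ a ≤ g(2v)`,
`Pr{X ≥ g(Y₀)} ≤ 1 − k_y(1 − E[X]/g(2v)) ≤ 1 − k_y(1 − a/g(2v))`. -/
theorem stmt10
    {Ω : Type*} [MeasurableSpace Ω] (P : Measure Ω) [IsProbabilityMeasure P]
    (g : ℝ → ℝ) (hg_mono : MonotoneOn g (Ici 0))
    (hg_nonneg : ∀ y, 0 ≤ y → 0 ≤ g y) (hg0 : g 0 = 0)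
    (hg_cont : ContinuousOn g (Ici 0))
    (ginv : ℝ → ℝ) (hginv : ∀ x, ginv x = sInf {y : ℝ | 0 ≤ y ∧ x ≤ g y})
    (v : ℝ) (hv : 0 < v) (hgv : 0 < g (2 * v))
    (ky : ℝ) (hky : ky ∈ Icc (0 : ℝ) 1)
    (V : Ω → ℝ) (hV : Measurable V) (hVlaw : P.map V = unifMix ky (g (2 * v)))
    (Y₀ : Ω → ℝ) (hY₀ : Y₀ = fun ω => ginv (V ω))
    (a : ℝ) (ha : 0 < a) (hagv : a ≤ g (2 * v))
    (X : Ω → ℝ) (hX : Measurable X) (hXnonneg : ∀ ω, 0 ≤ X ω)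
    (hXint : Integrable X P) (hEX : (∫ ω, X ω ∂P) ≤ a)
    (hindep : IndepFun X Y₀ P) :
    (P {ω | g (Y₀ ω) ≤ X ω}).toReal ≤ 1 - ky * (1 - (∫ ω, X ω ∂P) / g (2 * v)) ∧
    1 - ky * (1 - (∫ ω, X ω ∂P) / g (2 * v)) ≤ 1 - ky * (1 - a / g (2 * v)) :=
  stmt10_general P g hg0 hg_cont ginv hginv v hv hgv ky hky V hV hVlaw Y₀ hY₀ a X hXnonneg hXint hEX
    hindep
end

section
/- Let h be a random variable taking values in (0,∞) with E[h] < ∞, let σ_N² > 0 and P_M, J_M > 0. Let P and J be nonnegative random variables, with h, P, J mutually independent, satisfying E[P] ≤ P_M and E[J] ≤ J_M. Then E[ log(1 + h·P/(J_M + σ_N²)) ] ≤ E[ log(1 + h·P_M/(J_M + σ_N²)) ] ≤ E[ log(1 + h·P_M/(J + σ_N²)) ]. In particular, the deterministic (uniform) allocations P ≡ P_M and J ≡ J_M form a Nash equilibrium of the intra-frame power-allocation game without channel-state feedback. -/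
/-! Both inequalities are Jensen-type statements, proved by tangent-line bounds:
`log (1 + h P / (J_M + σ))` is concave in `P` and `log (1 + h P_M / (J + σ))` is convex in `J`.
Linearising at `P = P_M` (resp. `J = J_M`) bounds the integrand pointwise up to an error
`g(h) (P - P_M)` (resp. `g(h) (J - J_M)`) whose slope `g(h) ≥ 0` depends on `h` alone, so by
independence the error has expectation `E[g(h)] (E[P] - P_M) ≤ 0`. -/

open MeasureTheory ProbabilityTheory Real

lemma log_le_log_add_sub_div {x y : ℝ} (hx : 0 < x) (hy : 0 < y) :
    log y ≤ log x + (y - x) / x := by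
  have h := log_le_sub_one_of_pos (div_pos hy hx)
  rw [log_div hy.ne' hx.ne'] at h
  rw [sub_div, div_self hx.ne']
  linarith

lemma log_one_add_mul_div_le_add_mul_sub {x p q B : ℝ} (hx : 0 ≤ x) (hp : 0 ≤ p) (hq : 0 ≤ q)
    (hB : 0 < B) :
    log (1 + x * p / B) ≤ log (1 + x * q / B) + x / (B + x * q) * (p - q) := by
  calc log (1 + x * p / B)
      ≤ log (1 + x * q / B) + (1 + x * p / B - (1 + x * q / B)) / (1 + x * q / B) :=
        log_le_log_add_sub_div (by positivity) (by positivity)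
    _ = log (1 + x * q / B) + x / (B + x * q) * (p - q) := by
        field_simp
        ring

lemma log_one_add_div_le_add_mul_sub {a A B : ℝ} (ha : 0 ≤ a) (hA : 0 < A) (hB : 0 < B) :
    log (1 + a / B) ≤ log (1 + a / A) + a / ((B + a) * B) * (A - B) := by
  have hAa : 0 < A + a := by positivity
  have hBa : 0 < B + a := by positivity
  have htangent : log (1 + a / B)
      ≤ log (1 + a / A) + (1 + a / B - (1 + a / A)) / (1 + a / A) :=
    log_le_log_add_sub_div (by positivity) (by positivity)
  -- the two slopes differ by `a (A - B)² / (B (A + a) (B + a)) ≥ 0`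
  have hslope : (1 + a / B - (1 + a / A)) / (1 + a / A) ≤ a / ((B + a) * B) * (A - B) := by
    rw [show (1 + a / B - (1 + a / A)) / (1 + a / A) = a * (A - B) / ((A + a) * B) by
        field_simp; ring,
      div_mul_eq_mul_div, div_le_div_iff₀ (by positivity) (by positivity)]
    nlinarith [mul_nonneg (mul_nonneg ha hB.le) (sq_nonneg (A - B))]
  linarith

section

variable {Ω : Type*} [MeasurableSpace Ω] {μ : Measure Ω}

lemma integrable_log_one_add {f g : Ω → ℝ} (hg : Integrable g μ) (hf : AEStronglyMeasurable f μ)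
    (hf0 : ∀ᵐ ω ∂μ, 0 ≤ f ω) (hfg : ∀ᵐ ω ∂μ, f ω ≤ g ω) :
    Integrable (fun ω => log (1 + f ω)) μ := by
  refine hg.mono' (hf.aemeasurable.const_add 1).log.aestronglyMeasurable ?_
  filter_upwards [hf0, hfg] with ω hω0 hωg
  rw [norm_eq_abs, abs_of_nonneg (log_nonneg (by linarith))]
  linarith [log_le_sub_one_of_pos (show 0 < 1 + f ω by linarith)]

lemma ProbabilityTheory.IndepFun.integral_le_of_le_add_mul_sub {F G Z Y : Ω → ℝ} {c : ℝ}
    (hZY : IndepFun Z Y μ)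
    (hZ : Integrable Z μ) (hY : Integrable Y μ) (hZ0 : ∀ᵐ ω ∂μ, 0 ≤ Z ω) (hEY : ∫ ω, Y ω ∂μ ≤ c)
    (hF : Integrable F μ) (hG : Integrable G μ)
    (hFG : ∀ᵐ ω ∂μ, F ω ≤ G ω + Z ω * (Y ω - c)) :
    ∫ ω, F ω ∂μ ≤ ∫ ω, G ω ∂μ := by
  have hZY_int : Integrable (fun ω => Z ω * Y ω) μ := hZY.integrable_mul hZ hY
  have herror : ∫ ω, Z ω * (Y ω - c) ∂μ = (∫ ω, Z ω ∂μ) * ((∫ ω, Y ω ∂μ) - c) := by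
    simp_rw [mul_sub]
    rw [integral_sub hZY_int (hZ.mul_const c), integral_mul_const,
      ← hZY.integral_mul_eq_mul_integral hZ.aestronglyMeasurable hY.aestronglyMeasurable]
    rfl
  have herror_nonpos : ∫ ω, Z ω * (Y ω - c) ∂μ ≤ 0 := by
    rw [herror]
    exact mul_nonpos_of_nonneg_of_nonpos (integral_nonneg_of_ae hZ0) (sub_nonpos.2 hEY)
  have hZYc_int : Integrable (fun ω => Z ω * (Y ω - c)) μ := by
    simp_rw [mul_sub]
    exact hZY_int.sub (hZ.mul_const c)
  calc ∫ ω, F ω ∂μ ≤ ∫ ω, G ω + Z ω * (Y ω - c) ∂μ := integral_mono_ae hF (hG.add hZYc_int) hFG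
    _ = (∫ ω, G ω ∂μ) + ∫ ω, Z ω * (Y ω - c) ∂μ := integral_add hG hZYc_int
    _ ≤ ∫ ω, G ω ∂μ := by linarith

lemma ProbabilityTheory.IndepFun.integral_log_one_add_mul_div_le_of_integral_le
    {X Y : Ω → ℝ} {q B : ℝ}
    (hXY : IndepFun X Y μ) (hX : Integrable X μ) (hY : Integrable Y μ)
    (hX0 : ∀ᵐ ω ∂μ, 0 ≤ X ω) (hY0 : ∀ᵐ ω ∂μ, 0 ≤ Y ω) (hB : 0 < B) (hEY : ∫ ω, Y ω ∂μ ≤ q) :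
    ∫ ω, log (1 + X ω * Y ω / B) ∂μ ≤ ∫ ω, log (1 + X ω * q / B) ∂μ := by
  have hq : 0 ≤ q := (integral_nonneg_of_ae hY0).trans hEY
  set slope : ℝ → ℝ := fun x => x / (B + x * q)
  have hslope : Measurable slope := by fun_prop
  have hslope0 : ∀ x, 0 ≤ x → 0 ≤ slope x := fun x hx => by positivity
  refine (hXY.comp hslope measurable_id).integral_le_of_le_add_mul_sub
    ?_ hY (by filter_upwards [hX0] with ω hω using hslope0 _ hω) hEY ?_ ?_ ?_
  · refine (hX.div_const B).mono' (hslope.comp_aemeasurable hX.aemeasurable).aestronglyMeasurable ?_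
    filter_upwards [hX0] with ω hω
    rw [Function.comp_apply, norm_eq_abs, abs_of_nonneg (hslope0 _ hω)]
    exact div_le_div_of_nonneg_left hω hB (by nlinarith)
  · refine integrable_log_one_add ((hXY.integrable_mul hX hY).div_const B)
      ((hX.aemeasurable.mul hY.aemeasurable).div_const B).aestronglyMeasurable ?_
      (ae_of_all _ fun _ => le_rfl)
    filter_upwards [hX0, hY0] with ω hXω hYω
    positivity
  · refine integrable_log_one_add ((hX.mul_const q).div_const B)
      ((hX.aemeasurable.mul_const q).div_const B).aestronglyMeasurable ?_
      (ae_of_all _ fun _ => le_rfl)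
    filter_upwards [hX0] with ω hω
    positivity
  · filter_upwards [hX0, hY0] with ω hXω hYω
    exact log_one_add_mul_div_le_add_mul_sub hXω hYω hq hB

lemma ProbabilityTheory.IndepFun.integral_log_one_add_div_le_of_integral_le {X Y : Ω → ℝ} {c σ : ℝ}
    (hXY : IndepFun X Y μ) (hX : Integrable X μ) (hY : Integrable Y μ)
    (hX0 : ∀ᵐ ω ∂μ, 0 ≤ X ω) (hY0 : ∀ᵐ ω ∂μ, 0 ≤ Y ω) (hσ : 0 < σ) (hEY : ∫ ω, Y ω ∂μ ≤ c) :
    ∫ ω, log (1 + X ω / (c + σ)) ∂μ ≤ ∫ ω, log (1 + X ω / (Y ω + σ)) ∂μ := by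
  have hcσ : 0 < c + σ := by linarith [(integral_nonneg_of_ae hY0).trans hEY]
  set slope : ℝ → ℝ := fun x => x / ((c + σ + x) * (c + σ))
  have hslope : Measurable slope := by fun_prop
  have hslope0 : ∀ x, 0 ≤ x → 0 ≤ slope x := fun x hx => by positivity
  refine (hXY.comp hslope measurable_id).integral_le_of_le_add_mul_sub
    ?_ hY (by filter_upwards [hX0] with ω hω using hslope0 _ hω) hEY ?_ ?_ ?_
  · refine (hX.div_const ((c + σ) * (c + σ))).mono'
      (hslope.comp_aemeasurable hX.aemeasurable).aestronglyMeasurable ?_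
    filter_upwards [hX0] with ω hω
    rw [Function.comp_apply, norm_eq_abs, abs_of_nonneg (hslope0 _ hω)]
    exact div_le_div_of_nonneg_left hω (by positivity) (by nlinarith)
  · refine integrable_log_one_add (hX.div_const (c + σ))
      (hX.aemeasurable.div_const _).aestronglyMeasurable ?_ (ae_of_all _ fun _ => le_rfl)
    filter_upwards [hX0] with ω hω
    positivity
  · refine integrable_log_one_add (hX.div_const σ)
      (hX.aemeasurable.div (hY.aemeasurable.add_const σ)).aestronglyMeasurable ?_ ?_
    · filter_upwards [hX0, hY0] with ω hXω hYω
      positivity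
    · filter_upwards [hX0, hY0] with ω hXω hYω
      exact div_le_div_of_nonneg_left hXω hσ (by linarith)
  · filter_upwards [hX0, hY0] with ω hXω hYω
    have h := log_one_add_div_le_add_mul_sub hXω (by positivity : 0 < Y ω + σ) hcσ
    rwa [add_sub_add_right_eq_sub] at h

end

theorem stmt16_general
    {Ω : Type*} [MeasurableSpace Ω] (μ : Measure Ω)
    (h P J : Ω → ℝ)
    (hh_pos : ∀ ω, 0 < h ω) (hh_int : Integrable h μ)
    (hP_nonneg : ∀ ω, 0 ≤ P ω) (hJ_nonneg : ∀ ω, 0 ≤ J ω)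
    (hP_int : Integrable P μ) (hJ_int : Integrable J μ)
    (σ : ℝ) (hσ : 0 < σ) (PM JM : ℝ) (hPM : 0 < PM) (hJM : 0 < JM)
    (hEP : (∫ ω, P ω ∂μ) ≤ PM) (hEJ : (∫ ω, J ω ∂μ) ≤ JM)
    -- `h`, `P`, `J` are mutually independent
    (hindep : iIndepFun (m := fun _ : Fin 3 => (inferInstance : MeasurableSpace ℝ))
      ![h, P, J] μ) :
    (∫ ω, Real.log (1 + h ω * P ω / (JM + σ)) ∂μ) ≤
      (∫ ω, Real.log (1 + h ω * PM / (JM + σ)) ∂μ) ∧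
    (∫ ω, Real.log (1 + h ω * PM / (JM + σ)) ∂μ) ≤
      (∫ ω, Real.log (1 + h ω * PM / (J ω + σ)) ∂μ) := by
  have hhP : IndepFun h P μ := by simpa using hindep.indepFun (show (0 : Fin 3) ≠ 1 by decide)
  have hhJ : IndepFun h J μ := by simpa using hindep.indepFun (show (0 : Fin 3) ≠ 2 by decide)
  have hh0 : ∀ᵐ ω ∂μ, 0 ≤ h ω := ae_of_all _ fun ω => (hh_pos ω).le
  constructor
  · exact hhP.integral_log_one_add_mul_div_le_of_integral_le hh_int hP_int hh0
      (ae_of_all _ hP_nonneg) (by linarith) hEP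
  · have hhPM_J : IndepFun (fun ω => h ω * PM) J μ :=
      hhJ.comp (measurable_id.mul_const PM) measurable_id
    exact hhPM_J.integral_log_one_add_div_le_of_integral_le (hh_int.mul_const PM) hJ_int
      (by filter_upwards [hh0] with ω hω; positivity) (ae_of_all _ hJ_nonneg) hσ hEJ

/-- without channel-state feedback, for mutually independent `h`, `P`, `J`
with `E[P] ≤ P_M`, `E[J] ≤ J_M`, the deterministic allocations `P ≡ P_M`, `J ≡ J_M`
form a Nash equilibrium of the intra-frame game:
`E[log(1 + hP/(J_M + σ²))] ≤ E[log(1 + hP_M/(J_M + σ²))] ≤ E[log(1 + hP_M/(J + σ²))]`. -/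
theorem stmt16
    {Ω : Type*} [MeasurableSpace Ω] (μ : Measure Ω) [IsProbabilityMeasure μ]
    (h P J : Ω → ℝ)
    (hh_meas : Measurable h) (hP_meas : Measurable P) (hJ_meas : Measurable J)
    (hh_pos : ∀ ω, 0 < h ω) (hh_int : Integrable h μ)
    (hP_nonneg : ∀ ω, 0 ≤ P ω) (hJ_nonneg : ∀ ω, 0 ≤ J ω)
    (hP_int : Integrable P μ) (hJ_int : Integrable J μ)
    (σ : ℝ) (hσ : 0 < σ) (PM JM : ℝ) (hPM : 0 < PM) (hJM : 0 < JM)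
    (hEP : (∫ ω, P ω ∂μ) ≤ PM) (hEJ : (∫ ω, J ω ∂μ) ≤ JM)
    -- `h`, `P`, `J` are mutually independent
    (hindep : iIndepFun (m := fun _ : Fin 3 => (inferInstance : MeasurableSpace ℝ))
      ![h, P, J] μ) :
    (∫ ω, Real.log (1 + h ω * P ω / (JM + σ)) ∂μ) ≤
      (∫ ω, Real.log (1 + h ω * PM / (JM + σ)) ∂μ) ∧
    (∫ ω, Real.log (1 + h ω * PM / (JM + σ)) ∂μ) ≤
      (∫ ω, Real.log (1 + h ω * PM / (J ω + σ)) ∂μ) :=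
  stmt16_general μ h P J hh_pos hh_int hP_nonneg hJ_nonneg hP_int hJ_int σ hσ PM JM hPM hJM hEP hEJ
    hindep
end

section
/- Let μ′, σ_N², 𝒫, 𝒥 > 0 satisfy 𝒫 ≥ μ′σ_N² + (μ′𝒥/2)·(1 + √(1 + 2σ_N²/𝒥)). Define g(0) = 0 and g(y) = μ′·(y + σ_N²) for y > 0, with generalized inverse g⁻¹(x) = inf{ y ≥ 0 : g(y) ≥ x }. Then the values v = (𝒫 − μ′σ_N²)/μ′, k_x = 1, and k_y = μ′𝒥(2𝒫 − μ′σ_N²)/(2(𝒫 − μ′σ_N²)²) satisfy: v ≥ max{𝒥/2, g⁻¹(𝒫)/2}, k_y ∈ (0, 1], and the three equilibrium equations k_x·(1 − 𝒥/(2v)) = 1 − k_y·(1 − 𝒫/g(2v)), k_x = 2v𝒫 / ∫₀^{2v} g(y) dy, and k_y = g(2v)·𝒥 / ∫₀^{g(2v)} g⁻¹(x) dx. -/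
open Set

/-!
With `A = 𝒫 - μ′σ` the candidate value is `v = A / μ′`, so `g (2v) = 2𝒫 - μ′σ`, and
`g⁻¹ x = max 0 (x / μ′ - σ)` for `x > 0`; in particular `g⁻¹ 𝒫 = v`. Both integrals are then
elementary, which turns the three equilibrium equations into identities in `𝒫, 𝒥, μ′, σ`.
The bound `k_y ≤ 1` reads `μ′𝒥 (2A + μ′σ) ≤ 2A²`, a quadratic inequality in `A` whose larger
root is exactly `(μ′𝒥/2)(1 + √(1 + 2σ/𝒥))`: this is where the budget condition comes from.
-/

theorem mul_add_sq_mul_div_four_le_sq {r t x : ℝ} (hr : 0 ≤ r) (ht : 0 ≤ t)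
    (h : r / 2 * (1 + √(1 + t)) ≤ x) : r * x + r ^ 2 * t / 4 ≤ x ^ 2 := by
  have hs := Real.sqrt_nonneg (1 + t)
  have hs2 : √(1 + t) ^ 2 = 1 + t := Real.sq_sqrt (by linarith)
  -- `x ^ 2 - r x - r ^ 2 t / 4` factors as `(x - r/2 (1 + s)) (x - r/2 (1 - s))` with `s = √(1 + t)`
  have hfac : 0 ≤ (x - r / 2 * (1 + √(1 + t))) * (x - r / 2 * (1 - √(1 + t))) :=
    mul_nonneg (by linarith) (by nlinarith)
  nlinarith

section AffineThreshold

variable {a b : ℝ} {g : ℝ → ℝ}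

theorem sInf_setOf_le_affine_threshold (ha : 0 < a) (hg0 : g 0 = 0)
    (hg : ∀ y, 0 < y → g y = a * (y + b)) {x : ℝ} (hx : 0 < x) :
    sInf {y : ℝ | 0 ≤ y ∧ x ≤ g y} = max 0 (x / a - b) := by
  have hset : {y : ℝ | 0 ≤ y ∧ x ≤ g y} = {y | 0 < y ∧ x / a - b ≤ y} := by
    ext y
    simp only [mem_ofPred_eq]
    constructor
    · rintro ⟨hy, hxy⟩
      obtain rfl | hy := hy.eq_or_lt
      · rw [hg0] at hxy; linarith
      · rw [hg y hy, ← div_le_iff₀' ha] at hxy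
        exact ⟨hy, by linarith⟩
    · rintro ⟨hy, hxy⟩
      rw [hg y hy, ← div_le_iff₀' ha]
      exact ⟨hy.le, by linarith⟩
  rw [hset]
  rcases le_or_gt (x / a - b) 0 with hc | hc
  · have : {y : ℝ | 0 < y ∧ x / a - b ≤ y} = Ioi 0 := by
      ext y
      exact ⟨fun h => h.1, fun h => ⟨h, hc.trans h.le⟩⟩
    rw [this, csInf_Ioi, max_eq_left hc]
  · have : {y : ℝ | 0 < y ∧ x / a - b ≤ y} = Ici (x / a - b) := by
      ext y
      exact ⟨fun h => h.2, fun h => ⟨hc.trans_le h, h⟩⟩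
    rw [this, csInf_Ici, max_eq_right hc.le]

theorem integral_affine_threshold (hg : ∀ y, 0 < y → g y = a * (y + b)) {T : ℝ} (hT : 0 ≤ T) :
    ∫ y in (0 : ℝ)..T, g y = a * (T ^ 2 / 2 + b * T) := by
  have hcongr : ∫ y in (0 : ℝ)..T, g y = ∫ y in (0 : ℝ)..T, a * (y + b) :=
    intervalIntegral.integral_congr_ae <| .of_forall fun y hy => by
      rw [uIoc_of_le hT] at hy
      exact hg y hy.1
  rw [hcongr, intervalIntegral.integral_const_mul,
    intervalIntegral.integral_add intervalIntegral.intervalIntegrable_id intervalIntegrable_const,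
    integral_id, intervalIntegral.integral_const, smul_eq_mul]
  ring

theorem integral_max_zero_div_sub (ha : 0 < a) (hb : 0 ≤ b) {X : ℝ} (hX : a * b ≤ X) :
    ∫ x in (0 : ℝ)..X, max 0 (x / a - b) = (X - a * b) ^ 2 / (2 * a) := by
  have hcont : Continuous fun x : ℝ => max 0 (x / a - b) := by fun_prop
  have hzero : ∫ x in (0 : ℝ)..(a * b), max 0 (x / a - b) = 0 := by
    rw [intervalIntegral.integral_congr (g := fun _ => 0), intervalIntegral.integral_zero]
    intro x hx
    rw [uIcc_of_le (by positivity)] at hx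
    exact max_eq_left (by rw [sub_nonpos, div_le_iff₀' ha]; exact hx.2)
  have hlin : ∫ x in (a * b)..X, max 0 (x / a - b) = ∫ x in (a * b)..X, (x / a - b) := by
    refine intervalIntegral.integral_congr fun x hx => ?_
    rw [uIcc_of_le hX] at hx
    exact max_eq_right (by rw [sub_nonneg, le_div_iff₀' ha]; exact hx.1)
  rw [← intervalIntegral.integral_add_adjacent_intervals (b := a * b)
    (hcont.intervalIntegrable _ _) (hcont.intervalIntegrable _ _), hzero, hlin, zero_add,
    intervalIntegral.integral_sub (intervalIntegral.intervalIntegrable_id.div_const a)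
      intervalIntegrable_const,
    intervalIntegral.integral_div, integral_id, intervalIntegral.integral_const, smul_eq_mul]
  field_simp
  ring

theorem integral_sInf_setOf_le_affine_threshold (ha : 0 < a) (hb : 0 ≤ b) (hg0 : g 0 = 0)
    (hg : ∀ y, 0 < y → g y = a * (y + b)) {X : ℝ} (hX : a * b ≤ X) :
    ∫ x in (0 : ℝ)..X, sInf {y : ℝ | 0 ≤ y ∧ x ≤ g y} = (X - a * b) ^ 2 / (2 * a) := by
  rw [← integral_max_zero_div_sub ha hb hX]
  refine intervalIntegral.integral_congr_ae <| .of_forall fun x hx => ?_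
  rw [uIoc_of_le ((mul_nonneg ha.le hb).trans hX)] at hx
  exact sInf_setOf_le_affine_threshold ha hg0 hg hx.1

end AffineThreshold

theorem stmt19_general
    (mu' σ Pbar Jbar : ℝ)
    (hmu' : 0 < mu') (hσ : 0 < σ) (hJbar : 0 < Jbar)
    (hbudget : mu' * σ + mu' * Jbar / 2 * (1 + Real.sqrt (1 + 2 * σ / Jbar)) ≤ Pbar)
    (g : ℝ → ℝ) (hg0 : g 0 = 0) (hg : ∀ y : ℝ, 0 < y → g y = mu' * (y + σ))
    (ginv : ℝ → ℝ) (hginv : ∀ x, ginv x = sInf {y : ℝ | 0 ≤ y ∧ x ≤ g y})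
    (v kx ky : ℝ)
    (hv : v = (Pbar - mu' * σ) / mu')
    (hkx : kx = 1)
    (hky : ky = mu' * Jbar * (2 * Pbar - mu' * σ) / (2 * (Pbar - mu' * σ) ^ 2)) :
    max (Jbar / 2) (ginv Pbar / 2) ≤ v ∧
    ky ∈ Ioc (0 : ℝ) 1 ∧
    kx * (1 - Jbar / (2 * v)) = 1 - ky * (1 - Pbar / g (2 * v)) ∧
    kx = 2 * v * Pbar / (∫ y in (0 : ℝ)..(2 * v), g y) ∧
    ky = g (2 * v) * Jbar / (∫ x in (0 : ℝ)..(g (2 * v)), ginv x) := by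
  have hμJ : 0 < mu' * Jbar := mul_pos hmu' hJbar
  have hμσ : 0 < mu' * σ := mul_pos hmu' hσ
  have hA : mu' * Jbar / 2 ≤ Pbar - mu' * σ := by
    nlinarith [Real.sqrt_nonneg (1 + 2 * σ / Jbar)]
  have hApos : 0 < Pbar - mu' * σ := by linarith
  have hBpos : 0 < 2 * Pbar - mu' * σ := by linarith
  have hPpos : 0 < Pbar := by linarith
  have hmv : mu' * v = Pbar - mu' * σ := by rw [hv]; field_simp
  have hvJ : Jbar / 2 ≤ v := by rw [hv, le_div_iff₀ hmu']; linarith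
  have hvpos : 0 < v := by linarith
  have hg2v : g (2 * v) = 2 * Pbar - mu' * σ := by
    rw [hg _ (by linarith)]; linear_combination 2 * hmv
  have hginvP : ginv Pbar = v := by
    rw [hginv, sInf_setOf_le_affine_threshold hmu' hg0 hg (by linarith), hv,
      max_eq_right (by rw [sub_nonneg, le_div_iff₀ hmu']; linarith)]
    field_simp
  have hquad : mu' * Jbar * (2 * Pbar - mu' * σ) ≤ 2 * (Pbar - mu' * σ) ^ 2 := by
    have := mul_add_sq_mul_div_four_le_sq hμJ.le (by positivity : 0 ≤ 2 * σ / Jbar)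
      (x := Pbar - mu' * σ) (by linarith)
    field_simp at this
    linarith
  refine ⟨max_le (by linarith) (by rw [hginvP]; linarith),
    ⟨hky ▸ by positivity, hky ▸ (div_le_one (by positivity)).2 hquad⟩, ?_, ?_, ?_⟩
  · rw [hkx, hky, hg2v, hv]
    field_simp
    ring
  · rw [hkx, integral_affine_threshold hg (by linarith), show mu' * ((2 * v) ^ 2 / 2 + σ * (2 * v)) = 2 * v * Pbar by linear_combination 2 * v * hmv,
      div_self (by positivity)]
  · simp only [hginv]
    rw [hky, hg2v, integral_sInf_setOf_le_affine_threshold hmu' hσ.le hg0 hg (by linarith),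
      show 2 * Pbar - mu' * σ - mu' * σ = 2 * (Pbar - mu' * σ) by ring]
    field_simp

/-- in the no-CSI jamming game with threshold function `g(0) = 0`,
`g(y) = μ′(y + σ²)` for `y > 0`, if the transmitter budget satisfies
`𝒫 ≥ μ′σ² + (μ′𝒥/2)(1 + √(1 + 2σ²/𝒥))`, then `v = (𝒫 − μ′σ²)/μ′`, `k_x = 1` and
`k_y = μ′𝒥(2𝒫 − μ′σ²)/(2(𝒫 − μ′σ²)²)` satisfy `v ≥ max{𝒥/2, g⁻¹(𝒫)/2}`,
`k_y ∈ (0,1]`, and the three equilibrium equations. -/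
theorem stmt19
    (mu' σ Pbar Jbar : ℝ)
    (hmu' : 0 < mu') (hσ : 0 < σ) (hPbar : 0 < Pbar) (hJbar : 0 < Jbar)
    (hbudget : mu' * σ + mu' * Jbar / 2 * (1 + Real.sqrt (1 + 2 * σ / Jbar)) ≤ Pbar)
    (g : ℝ → ℝ) (hg0 : g 0 = 0) (hg : ∀ y : ℝ, 0 < y → g y = mu' * (y + σ))
    (ginv : ℝ → ℝ) (hginv : ∀ x, ginv x = sInf {y : ℝ | 0 ≤ y ∧ x ≤ g y})
    (v kx ky : ℝ)
    (hv : v = (Pbar - mu' * σ) / mu')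
    (hkx : kx = 1)
    (hky : ky = mu' * Jbar * (2 * Pbar - mu' * σ) / (2 * (Pbar - mu' * σ) ^ 2)) :
    max (Jbar / 2) (ginv Pbar / 2) ≤ v ∧
    ky ∈ Ioc (0 : ℝ) 1 ∧
    kx * (1 - Jbar / (2 * v)) = 1 - ky * (1 - Pbar / g (2 * v)) ∧
    kx = 2 * v * Pbar / (∫ y in (0 : ℝ)..(2 * v), g y) ∧
    ky = g (2 * v) * Jbar / (∫ x in (0 : ℝ)..(g (2 * v)), ginv x) :=
  stmt19_general mu' σ Pbar Jbar hmu' hσ hJbar hbudget g hg0 hg ginv hginv v kx ky hv hkx hky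
end
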